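/- arXiv:2112.07904 — 6 statements merged into one kernel-verified Lean document; each statement's English description precedes it below -/
import Mathlib

section
/- For every row vector v = (a₁, …, a_{n+2m−1}) ∈ R^{n+2m−1}, the Vaserstein-type matrix L(v) lies in E_{n+2m}(R), i.e. L(v) is a product of elementary matrices. -/
/-!
Since `dᵗ = -1̄⁻¹·e₁` and the first column of `μ` vanishes, `L(v) - 1` is supported on the first
column (entries `vᵗ`, zero on the diagonal) and the second row (entries `-1̄⁻¹·v̄·μ`, zero on the
diagonal). Writing `C` and `D` for these two parts, `C·D = 0` gives `L(v) = (1 + C)(1 + D)`, and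
each factor is the product of the pairwise commuting elementary matrices given by its entries.
-/

open Matrix BigOperators

namespace OddUnitary

/-- A pseudoinvolution on a commutative ring `R`: `sigma` is the additive map `r ↦ r̄`
satisfying `σ(r₁r₂) = σ(r₂)·σ(1)⁻¹·σ(r₁)` and `σ(σ(r)) = r`; the field `i` is the
inverse `1̄⁻¹` of the unit `1̄ = sigma 1`. -/
structure PseudoInv (R : Type*) [CommRing R] where
  sigma : R →+ R
  i : R
  bar_one_mul_i : sigma 1 * i = 1
  i_mul_bar_one : i * sigma 1 = 1
  bar_mul : ∀ r s : R, sigma (r * s) = sigma s * i * sigma r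
  bar_bar : ∀ r : R, sigma (sigma r) = r

variable {R : Type*} [CommRing R]

/-- Entry `(i, j)` of the matrix `ψ̃_{s/2} ⊥ φ`: hyperbolic blocks
`ψ̃₁ = [[0, 1], [-1̄, 0]]` occupying the first `s` (an even number) indices,
followed by the `n × n` form matrix `φ`. -/
def psiEnt (P : PseudoInv R) {n : ℕ} (φ : Matrix (Fin n) (Fin n) R) (s i j : ℕ) : R :=
  if i < s ∧ j < s then
    (if j = i + 1 ∧ i % 2 = 0 then 1
     else if i = j + 1 ∧ j % 2 = 0 then -(P.sigma 1) else 0)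
  else if h : s ≤ i ∧ i < s + n ∧ s ≤ j ∧ j < s + n then
    φ ⟨i - s, by omega⟩ ⟨j - s, by omega⟩
  else 0

/-- Entry `(i, j)` of the matrix `ψ̃′_{s/2} ⊥ (1̄⁻¹)²·φ`, where
`ψ̃′₁ = [[0, -1̄⁻¹], [1, 0]]`. -/
def psi'Ent (P : PseudoInv R) {n : ℕ} (φ : Matrix (Fin n) (Fin n) R) (s i j : ℕ) : R :=
  if i < s ∧ j < s then
    (if j = i + 1 ∧ i % 2 = 0 then -P.i
     else if i = j + 1 ∧ j % 2 = 0 then 1 else 0)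
  else if h : s ≤ i ∧ i < s + n ∧ s ≤ j ∧ j < s + n then
    P.i * P.i * φ ⟨i - s, by omega⟩ ⟨j - s, by omega⟩
  else 0

/-- The form matrix `Ψ = ψ̃ₘ ⊥ φ` of Petrov's odd hyperbolic unitary group. -/
def PsiM (P : PseudoInv R) {n : ℕ} (φ : Matrix (Fin n) (Fin n) R) (m : ℕ) :
    Matrix (Fin (n + 2*m)) (Fin (n + 2*m)) R :=
  fun i j => psiEnt P φ (2*m) i j

/-- The row vector `c = (1, 0, …, 0) ∈ R^{n+2m-1}`. -/
def crow (R : Type*) [CommRing R] (n m : ℕ) : Fin (n + 2*m - 1) → R :=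
  fun j => if (j : ℕ) = 0 then 1 else 0

/-- The row vector `d = (-1̄⁻¹, 0, …, 0) ∈ R^{n+2m-1}`. -/
def drow (P : PseudoInv R) (n m : ℕ) : Fin (n + 2*m - 1) → R :=
  fun j => if (j : ℕ) = 0 then -P.i else 0

/-- `μ`, the lower-right `(n+2m-1) × (n+2m-1)` block of `Ψ`. -/
def muM (P : PseudoInv R) {n : ℕ} (φ : Matrix (Fin n) (Fin n) R) (m : ℕ) :
    Matrix (Fin (n + 2*m - 1)) (Fin (n + 2*m - 1)) R :=
  fun i j => psiEnt P φ (2*m) ((i : ℕ) + 1) ((j : ℕ) + 1)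

/-- `ρ`, the lower-right `(n+2m-1) × (n+2m-1)` block of `Ψ⁻¹`. -/
noncomputable def rhoM (P : PseudoInv R) {n : ℕ} (φ : Matrix (Fin n) (Fin n) R) (m : ℕ) :
    Matrix (Fin (n + 2*m - 1)) (Fin (n + 2*m - 1)) R :=
  fun i j => (PsiM P φ m)⁻¹ ⟨(i : ℕ) + 1, by omega⟩ ⟨(j : ℕ) + 1, by omega⟩

/-- `α = I_{n+2m-1} + dᵗ·v̄·μ`. -/
def alphaM (P : PseudoInv R) {n : ℕ} (φ : Matrix (Fin n) (Fin n) R) (m : ℕ)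
    (v : Fin (n + 2*m - 1) → R) : Matrix (Fin (n + 2*m - 1)) (Fin (n + 2*m - 1)) R :=
  1 + vecMulVec (drow P n m) (fun k => P.sigma (v k)) * muM P φ m

/-- `β = I_{n+2m-1} - 1̄⁻¹·ρ·v̄ᵗ·c`. -/
noncomputable def betaM (P : PseudoInv R) {n : ℕ} (φ : Matrix (Fin n) (Fin n) R) (m : ℕ)
    (v : Fin (n + 2*m - 1) → R) : Matrix (Fin (n + 2*m - 1)) (Fin (n + 2*m - 1)) R :=
  1 - P.i • vecMulVec (rhoM P φ m *ᵥ fun k => P.sigma (v k)) (crow R n m)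

/-- The Vaserstein-type matrix `L(v) = [[1, 0], [vᵗ, α]]` (block form). -/
def Lmat (P : PseudoInv R) {n : ℕ} (φ : Matrix (Fin n) (Fin n) R) (m : ℕ)
    (v : Fin (n + 2*m - 1) → R) : Matrix (Fin (n + 2*m)) (Fin (n + 2*m)) R :=
  fun i j =>
    if hi : (i : ℕ) = 0 then (if (j : ℕ) = 0 then 1 else 0)
    else if hj : (j : ℕ) = 0 then v ⟨(i : ℕ) - 1, by omega⟩
    else alphaM P φ m v ⟨(i : ℕ) - 1, by omega⟩ ⟨(j : ℕ) - 1, by omega⟩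

/-- The Vaserstein-type matrix `L(v)* = [[1, v], [0, β]]` (block form). -/
noncomputable def Lstar (P : PseudoInv R) {n : ℕ} (φ : Matrix (Fin n) (Fin n) R) (m : ℕ)
    (v : Fin (n + 2*m - 1) → R) : Matrix (Fin (n + 2*m)) (Fin (n + 2*m)) R :=
  fun i j =>
    if hi : (i : ℕ) = 0 then (if hj : (j : ℕ) = 0 then 1 else v ⟨(j : ℕ) - 1, by omega⟩)
    else if hj : (j : ℕ) = 0 then 0
    else betaM P φ m v ⟨(i : ℕ) - 1, by omega⟩ ⟨(j : ℕ) - 1, by omega⟩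

/-- `q(a₂, …, a_{n+2m-1}) = 1̄⁻¹·(ā₂, …, ā_{n+2m-1})·(ψ̃_{m-1} ⊥ φ)·(a₂, …, a_{n+2m-1})ᵗ`. -/
def qform (P : PseudoInv R) {n : ℕ} (φ : Matrix (Fin n) (Fin n) R) (m : ℕ)
    (v : Fin (n + 2*m - 1) → R) : R :=
  P.i * ∑ i : Fin (n + 2*m - 2), ∑ j : Fin (n + 2*m - 2),
    P.sigma (v ⟨(i : ℕ) + 1, by omega⟩) * psiEnt P φ (2*m - 2) i j * v ⟨(j : ℕ) + 1, by omega⟩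

/-- Condition (D) on `v = (a₁, …, a_{n+2m-1})`:
`ā₁ - a₁ = 1̄⁻¹·(ā₂, …)·(ψ̃_{m-1} ⊥ φ)·(a₂, …)ᵗ = q(a₂, …, a_{n+2m-1})`. -/
def condD (P : PseudoInv R) {n : ℕ} (φ : Matrix (Fin n) (Fin n) R) (m : ℕ)
    (hn : 1 ≤ n) (hm : 2 ≤ m) (v : Fin (n + 2*m - 1) → R) : Prop :=
  P.sigma (v ⟨0, by omega⟩) - v ⟨0, by omega⟩ = qform P φ m v

/-- Condition (E) on `v = (a₁, …, a_{n+2m-1})`: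
`σ(1̄·a₁) - 1̄·a₁ = (ā₂, …)·(ψ̃′_{m-1} ⊥ (1̄⁻¹)²·φ)ᵗ·(a₂, …)ᵗ`. -/
def condE (P : PseudoInv R) {n : ℕ} (φ : Matrix (Fin n) (Fin n) R) (m : ℕ)
    (hn : 1 ≤ n) (hm : 2 ≤ m) (v : Fin (n + 2*m - 1) → R) : Prop :=
  P.sigma (P.sigma 1 * v ⟨0, by omega⟩) - P.sigma 1 * v ⟨0, by omega⟩ =
    ∑ i : Fin (n + 2*m - 2), ∑ j : Fin (n + 2*m - 2),
      P.sigma (v ⟨(i : ℕ) + 1, by omega⟩) * psi'Ent P φ (2*m - 2) j i * v ⟨(j : ℕ) + 1, by omega⟩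

/-- The form `B(x, y) = (x mapped entrywise by σ)ᵗ·1̄⁻¹·Ψ·y` on column vectors. -/
def Bform (P : PseudoInv R) {n : ℕ} (φ : Matrix (Fin n) (Fin n) R) (m : ℕ)
    (x y : Fin (n + 2*m) → R) : R :=
  ∑ i, ∑ j, P.sigma (x i) * P.i * PsiM P φ m i j * y j

/-- Entry function of the Gram matrix `G = φ ⊥ ψ̃ₘ` (form matrix `φ` first), in the
ordered basis `(v₁, …, vₙ, e₁, e₋₁, e₂, e₋₂, …, eₘ, e₋ₘ)`. -/
def gEnt (P : PseudoInv R) {n : ℕ} (φ : Matrix (Fin n) (Fin n) R) (i j : ℕ) : R :=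
  if h : i < n ∧ j < n then φ ⟨i, by omega⟩ ⟨j, by omega⟩
  else if n ≤ i ∧ n ≤ j then
    (if j = i + 1 ∧ (i - n) % 2 = 0 then 1
     else if i = j + 1 ∧ (j - n) % 2 = 0 then -(P.sigma 1) else 0)
  else 0

/-- The Gram matrix `G = φ ⊥ ψ̃ₘ`. -/
def GM (P : PseudoInv R) {n : ℕ} (φ : Matrix (Fin n) (Fin n) R) (m : ℕ) :
    Matrix (Fin (n + 2*m)) (Fin (n + 2*m)) R :=
  fun i j => gEnt P φ i j

/-- The sesquilinear form `⟨x, y⟩ = Σ_{i,j} σ(xᵢ)·1̄⁻¹·G_{ij}·yⱼ` on `V = R^{n+2m}`. -/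
def formV (P : PseudoInv R) {n : ℕ} (φ : Matrix (Fin n) (Fin n) R) (m : ℕ)
    (x y : Fin (n + 2*m) → R) : R :=
  ∑ i, ∑ j, P.sigma (x i) * P.i * GM P φ m i j * y j

/-- The Eichler–Siegel–Dickson transvection
`T_{x,y}(r)(w) = w + x·1̄⁻¹·(⟨y, w⟩ + r·⟨x, w⟩) + y·⟨x, w⟩`. -/
def ESD (P : PseudoInv R) {n : ℕ} (φ : Matrix (Fin n) (Fin n) R) (m : ℕ)
    (x y : Fin (n + 2*m) → R) (r : R) (w : Fin (n + 2*m) → R) : Fin (n + 2*m) → R :=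
  w + (P.i * (formV P φ m y w + r * formV P φ m x w)) • x + formV P φ m x w • y

/-- The basis vector `e₁` (position `n` in the ordered basis). -/
def e1vec (R : Type*) [CommRing R] (n m : ℕ) : Fin (n + 2*m) → R :=
  fun l => if (l : ℕ) = n then 1 else 0

/-- The basis vector `e₋₁` (position `n+1` in the ordered basis). -/
def eneg1vec (R : Type*) [CommRing R] (n m : ℕ) : Fin (n + 2*m) → R :=
  fun l => if (l : ℕ) = n + 1 then 1 else 0

/-- The matrix `M₁(u, a)` of the transvection `T₁(u, a)` in the ordered basis
`(v₁, …, vₙ, e₁, e₋₁, e₂, e₋₂, …, eₘ, e₋ₘ)`; here `u` is the coordinate vector of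
`t₁v₁ + … + tₙvₙ + b₁e₁ + b₂e₂ + b₋₂e₋₂ + … + bₘeₘ + b₋ₘe₋ₘ`. -/
def M1 (P : PseudoInv R) {n : ℕ} (φ : Matrix (Fin n) (Fin n) R) (m : ℕ)
    (u : Fin (n + 2*m) → R) (a : R) : Matrix (Fin (n + 2*m)) (Fin (n + 2*m)) R :=
  fun i j =>
    if hj1 : (j : ℕ) = n + 1 then
      -- the `e₋₁` column
      if hi : (i : ℕ) < n then -u i
      else if hi1 : (i : ℕ) = n then
        -(P.sigma (u ⟨n, by omega⟩) * (P.i * P.i) + a * P.i + u ⟨n, by omega⟩)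
      else if hi2 : (i : ℕ) = n + 1 then 1
      else -u i
    else if hi1 : (i : ℕ) = n then
      -- the `e₁` row
      if hj : (j : ℕ) < n then
        -((P.i * P.i) * ∑ l : Fin n, P.sigma (u ⟨(l : ℕ), by omega⟩) * φ l ⟨(j : ℕ), hj⟩)
      else if hj2 : (j : ℕ) = n then 1
      else if hj3 : ((j : ℕ) - n) % 2 = 0 then
        P.i * P.sigma (u ⟨(j : ℕ) + 1, by omega⟩)
      else -(P.i * P.i) * P.sigma (u ⟨(j : ℕ) - 1, by omega⟩)
    else if (i : ℕ) = (j : ℕ) then 1 else 0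

/-- The matrix `M₋₁(u, a)` of the transvection `T₋₁(u, a)` in the ordered basis
`(v₁, …, vₙ, e₁, e₋₁, e₂, e₋₂, …, eₘ, e₋ₘ)`; here `u` is the coordinate vector of
`t₁v₁ + … + tₙvₙ + b₋₁e₋₁ + b₂e₂ + b₋₂e₋₂ + … + bₘeₘ + b₋ₘe₋ₘ`. -/
def Mneg1 (P : PseudoInv R) {n : ℕ} (φ : Matrix (Fin n) (Fin n) R) (m : ℕ)
    (u : Fin (n + 2*m) → R) (a : R) : Matrix (Fin (n + 2*m)) (Fin (n + 2*m)) R :=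
  fun i j =>
    if hj1 : (j : ℕ) = n then
      -- the `e₁` column
      if hi : (i : ℕ) < n then -u i
      else if hi1 : (i : ℕ) = n then 1
      else if hi2 : (i : ℕ) = n + 1 then
        -P.sigma (u ⟨n + 1, by omega⟩) + a - u ⟨n + 1, by omega⟩
      else -u i
    else if hi1 : (i : ℕ) = n + 1 then
      -- the `e₋₁` row
      if hj : (j : ℕ) < n then
        P.i * ∑ l : Fin n, P.sigma (u ⟨(l : ℕ), by omega⟩) * φ l ⟨(j : ℕ), hj⟩
      else if hj2 : (j : ℕ) = n + 1 then 1
      else if hj3 : ((j : ℕ) - n) % 2 = 0 then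
        -P.sigma (u ⟨(j : ℕ) + 1, by omega⟩)
      else P.i * P.sigma (u ⟨(j : ℕ) - 1, by omega⟩)
    else if (i : ℕ) = (j : ℕ) then 1 else 0

/-- The permutation matrix `P = [[0_{2m×n}, I_{2m}], [Iₙ, 0_{n×2m}]]`. -/
def Pperm (R : Type*) [CommRing R] (n m : ℕ) :
    Matrix (Fin (n + 2*m)) (Fin (n + 2*m)) R :=
  fun i j =>
    if (i : ℕ) < 2*m then (if (j : ℕ) = n + i then 1 else 0)
    else (if (j : ℕ) = (i : ℕ) - 2*m then 1 else 0)

/-- The coordinate vector of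
`u₁ = -a_{2m}v₁ - … - a_{n+2m-1}vₙ - a₂e₂ - a₃e₋₂ - … - a_{2m-2}eₘ - a_{2m-1}e₋ₘ`. -/
def u1vec {R : Type*} [CommRing R] {n m : ℕ} (hm : 2 ≤ m)
    (v : Fin (n + 2*m - 1) → R) : Fin (n + 2*m) → R :=
  fun l =>
    if hl : (l : ℕ) < n then -v ⟨2*m - 1 + (l : ℕ), by omega⟩
    else if hl1 : (l : ℕ) = n ∨ (l : ℕ) = n + 1 then 0
    else -v ⟨(l : ℕ) - n - 1, by omega⟩

/-- The coordinate vector of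
`u₂ = Σₖ 1̄⁻¹·(ā_{2m}·(φ⁻¹)_{k1} + … + ā_{n+2m-1}·(φ⁻¹)_{kn})·vₖ
      - (1̄⁻¹)²·ā₃e₂ + 1̄⁻¹·ā₂e₋₂ - … - (1̄⁻¹)²·ā_{2m-1}eₘ + 1̄⁻¹·ā_{2m-2}e₋ₘ`. -/
noncomputable def u2vec (P : PseudoInv R) {n : ℕ} (φ : Matrix (Fin n) (Fin n) R) {m : ℕ} (hm : 2 ≤ m)
    (v : Fin (n + 2*m - 1) → R) : Fin (n + 2*m) → R :=
  fun l =>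
    if hl : (l : ℕ) < n then
      P.i * ∑ j : Fin n, P.sigma (v ⟨2*m - 1 + (j : ℕ), by omega⟩) * φ⁻¹ ⟨(l : ℕ), hl⟩ j
    else if hl1 : (l : ℕ) = n ∨ (l : ℕ) = n + 1 then 0
    else if hl2 : ((l : ℕ) - n) % 2 = 0 then
      -(P.i * P.i) * P.sigma (v ⟨(l : ℕ) - n, by omega⟩)
    else P.i * P.sigma (v ⟨(l : ℕ) - n - 2, by omega⟩)

end OddUnitary

theorem Submonoid.one_add_sum_mem {A ι : Type*} [Ring A] (S : Submonoid A) {X : ι → A}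
    (s : Finset ι) (hmul : (s : Set ι).Pairwise fun a b => X a * X b = 0)
    (hmem : ∀ a ∈ s, 1 + X a ∈ S) : 1 + ∑ a ∈ s, X a ∈ S := by
  classical
  induction s using Finset.induction_on with
  | empty => simp
  | insert a s ha ih =>
    have hzero : X a * ∑ b ∈ s, X b = 0 := by
      rw [Finset.mul_sum]
      exact Finset.sum_eq_zero fun b hb =>
        hmul (by simp) (by simp [hb]) (by rintro rfl; exact ha hb)
    have hfactor : 1 + ∑ b ∈ insert a s, X b = (1 + X a) * (1 + ∑ b ∈ s, X b) := by
      rw [Finset.sum_insert ha, add_mul, one_mul, mul_add, mul_one, hzero]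
      abel
    rw [hfactor]
    exact S.mul_mem (hmem a (by simp))
      (ih (hmul.mono (by simp)) fun b hb => hmem b (by simp [hb]))

namespace Matrix

section Semiring

variable {ι R : Type*} [Fintype ι] [DecidableEq ι] [NonAssocSemiring R]

theorem vecMulVec_single_right (c : ι → R) (j : ι) :
    vecMulVec c (Pi.single j 1) = ∑ a, single a j (c a) := by
  ext a b
  simp [vecMulVec_apply, Matrix.sum_apply, single_apply, Pi.single_apply, ite_and, eq_comm]

theorem vecMulVec_single_left (i : ι) (w : ι → R) :
    vecMulVec (Pi.single i 1) w = ∑ b, single i b (w b) := by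
  ext a b
  simp [vecMulVec_apply, Matrix.sum_apply, single_apply, Pi.single_apply, ite_and, eq_comm]

end Semiring

variable {ι R : Type*} [Fintype ι] [DecidableEq ι] [CommRing R]

variable (ι R) in
/-- `E(ι, R)`. As a submonoid closure it is already a group, since `transvection i j r` has
inverse `transvection i j (-r)`. -/
def elementarySubmonoid : Submonoid (Matrix ι ι R) :=
  Submonoid.closure {A | ∃ (i j : ι) (r : R), i ≠ j ∧ A = transvection i j r}

theorem one_add_single_mem_elementarySubmonoid {i j : ι} {r : R} (h : i = j → r = 0) :
    1 + single i j r ∈ elementarySubmonoid ι R := by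
  by_cases hij : i = j
  · rw [h hij, single_zero, add_zero]
    exact one_mem _
  · exact Submonoid.subset_closure ⟨i, j, r, hij, rfl⟩

theorem one_add_vecMulVec_single_right_mem {c : ι → R} {j : ι} (hc : c j = 0) :
    1 + vecMulVec c (Pi.single j 1) ∈ elementarySubmonoid ι R := by
  rw [vecMulVec_single_right]
  refine Submonoid.one_add_sum_mem _ _ (fun a _ b _ _ => ?_)
    fun a _ => one_add_single_mem_elementarySubmonoid fun h => h ▸ hc
  by_cases hb : j = b
  · simp only [← hb, hc, single_zero, mul_zero]
  · exact single_mul_single_of_ne (h := hb) ..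

theorem one_add_vecMulVec_single_left_mem {i : ι} {w : ι → R} (hw : w i = 0) :
    1 + vecMulVec (Pi.single i 1) w ∈ elementarySubmonoid ι R := by
  rw [vecMulVec_single_left]
  refine Submonoid.one_add_sum_mem _ _ (fun a _ b _ _ => ?_)
    fun b _ => one_add_single_mem_elementarySubmonoid fun h => h ▸ hw
  by_cases ha : a = i
  · simp only [ha, hw, single_zero, zero_mul]
  · exact single_mul_single_of_ne (h := ha) ..

end Matrix

namespace OddUnitary

variable {R : Type*} [CommRing R]

def zeroCons {K : ℕ} (v : Fin (K - 1) → R) : Fin K → R :=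
  fun i => if h : (i : ℕ) = 0 then 0 else v ⟨i - 1, by omega⟩

/-- As `dᵗ = -1̄⁻¹·e₁`, this is the only nonzero row of `α - 1 = dᵗ·v̄·μ`. -/
def alphaRow (P : PseudoInv R) {n : ℕ} (φ : Matrix (Fin n) (Fin n) R) (m : ℕ)
    (v : Fin (n + 2*m - 1) → R) : Fin (n + 2*m - 1) → R :=
  -P.i • ((fun k => P.sigma (v k)) ᵥ* muM P φ m)

variable (P : PseudoInv R) {n m : ℕ} (φ : Matrix (Fin n) (Fin n) R)
  (v : Fin (n + 2*m - 1) → R)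

theorem muM_apply_zero_right (hm : 1 ≤ m) (k : Fin (n + 2*m - 1)) :
    muM P φ m k ⟨0, by omega⟩ = 0 := by
  simp only [muM, psiEnt]
  split_ifs <;> first | rfl | omega | simp_all

theorem alphaRow_zero (hm : 1 ≤ m) : alphaRow P φ m v ⟨0, by omega⟩ = 0 := by
  simp [alphaRow, vecMul, dotProduct, muM_apply_zero_right P φ hm]

theorem alphaM_eq (hm : 1 ≤ m) :
    alphaM P φ m v = 1 + vecMulVec (Pi.single ⟨0, by omega⟩ 1) (alphaRow P φ m v) := by
  rw [alphaM, vecMulVec_mul]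
  congr 1
  ext a b
  by_cases ha : (a : ℕ) = 0 <;>
    simp [drow, alphaRow, vecMulVec_apply, Pi.single_apply, Fin.ext_iff, ha]

theorem Lmat_eq_mul (hm : 1 ≤ m) :
    Lmat P φ m v = (1 + vecMulVec (zeroCons v) (Pi.single ⟨0, by omega⟩ 1)) *
      (1 + vecMulVec (Pi.single ⟨1, by omega⟩ 1) (zeroCons (alphaRow P φ m v))) := by
  have horth : Pi.single (⟨0, by omega⟩ : Fin (n + 2*m)) (1 : R) ⬝ᵥ
      Pi.single ⟨1, by omega⟩ 1 = 0 := by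
    simp [Fin.ext_iff]
  rw [add_mul, one_mul, mul_add, mul_one, vecMulVec_mul_vecMulVec, horth, zero_smul,
    vecMulVec_zero, add_zero]
  ext i j
  simp only [Lmat, alphaM_eq P φ v hm, Matrix.add_apply, one_apply, vecMulVec_apply, zeroCons,
    Pi.single_apply, Fin.ext_iff]
  split_ifs <;> first | omega | simp_all

theorem Lmat_mem_elementarySubgroup_general {R : Type*} [CommRing R] (P : PseudoInv R)
    {n m : ℕ} (hm : 2 ≤ m)
    (φ : Matrix (Fin n) (Fin n) R)
    (v : Fin (n + 2*m - 1) → R) :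
    ∃ l : List (Matrix (Fin (n + 2*m)) (Fin (n + 2*m)) R),
      (∀ A ∈ l, ∃ (i j : Fin (n + 2*m)) (r : R),
        i ≠ j ∧ A = 1 + Matrix.single i j r) ∧
      l.prod = Lmat P φ m v := by
  have hL : Lmat P φ m v ∈ elementarySubmonoid (Fin (n + 2*m)) R := by
    rw [Lmat_eq_mul P φ v (by omega)]
    refine mul_mem (one_add_vecMulVec_single_right_mem ?_)
      (one_add_vecMulVec_single_left_mem ?_)
    · simp [zeroCons]
    · simpa [zeroCons] using alphaRow_zero P φ v (by omega)
  exact Submonoid.exists_list_of_mem_closure hL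

/-- for every `v ∈ R^{n+2m-1}`, the Vaserstein-type matrix `L(v)` lies in
`E_{n+2m}(R)`, i.e. `L(v)` is a product of elementary matrices. -/
theorem Lmat_mem_elementarySubgroup {R : Type*} [CommRing R] (P : PseudoInv R)
    {n m : ℕ} (hn : 1 ≤ n) (hm : 2 ≤ m)
    (φ : Matrix (Fin n) (Fin n) R) (hφ : IsUnit φ.det)
    (v : Fin (n + 2*m - 1) → R) :
    ∃ l : List (Matrix (Fin (n + 2*m)) (Fin (n + 2*m)) R),
      (∀ A ∈ l, ∃ (i j : Fin (n + 2*m)) (r : R),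
        i ≠ j ∧ A = 1 + Matrix.single i j r) ∧
      l.prod = Lmat P φ m v :=
  Lmat_mem_elementarySubgroup_general P hm φ v

end OddUnitary
end

section
/- For every row vector v = (a₁, …, a_{n+2m−1}) ∈ R^{n+2m−1}, the Vaserstein-type matrix L(v)* lies in E_{n+2m}(R), i.e. L(v)* is a product of elementary matrices. -/
open Matrix BigOperators

/-!
Only the first column of `β` differs from the identity, and its top entry `1̄⁻¹·(ρ·v̄ᵗ)₁` vanishes:
the first row of `Ψ` is the unit vector `e₂`, so the second row of `Ψ⁻¹` is `e₁` and the first row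
of `ρ` is zero. Hence `L(v)*` agrees with the identity outside row `1` and column `2`, with ones at
`(1, 1)` and `(2, 2)`. Such a matrix is `(1 + X)(1 + Y)` with `X` its part in column `2` and `Y` its
part in row `1`, and each factor is a product of pairwise commuting transvections. (Indices are
counted from `1` here, as in the paper; in the code the row and column are `0` and `1`.)
-/

namespace Matrix

variable {ι : Type*} [Fintype ι] [DecidableEq ι]

theorem inv_apply_eq_zero_of_row_eq_single {R : Type*} [CommRing R] {A : Matrix ι ι R} {a b : ι}
    (hA : A a = Pi.single b 1) {j : ι} (hj : j ≠ a) : A⁻¹ b j = 0 := by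
  by_cases hdet : IsUnit A.det
  · calc A⁻¹ b j = (Pi.single b 1 ᵥ* A⁻¹) j := by rw [single_one_vecMul]; rfl
      _ = (A * A⁻¹) a j := by rw [← hA]; rfl
      _ = 0 := by rw [mul_nonsing_inv _ hdet, one_apply_ne hj.symm]
  · rw [nonsing_inv_apply_not_isUnit _ hdet, Matrix.zero_apply]

section Transvections

variable (ι) (R : Type*) [Semiring R]

def transvections : Set (Matrix ι ι R) :=
  {A | ∃ (i j : ι) (r : R), i ≠ j ∧ A = 1 + single i j r}

variable {ι R}

theorem one_add_sum_single_mem_closure_transvections {κ : Type*} (s : Finset κ) (row col : κ → ι)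
    (c : κ → R) (h : ∀ k ∈ s, ∀ l ∈ s, col k ≠ row l) :
    1 + ∑ k ∈ s, single (row k) (col k) (c k) ∈
      Submonoid.closure (transvections ι R) := by
  classical
  induction s using Finset.induction_on with
  | empty => simp only [Finset.sum_empty, add_zero]; exact Submonoid.one_mem _
  | @insert a s ha ih =>
    have hs : ∀ k ∈ s, ∀ l ∈ s, col k ≠ row l := fun k hk l hl =>
      h k (Finset.mem_insert_of_mem hk) l (Finset.mem_insert_of_mem hl)
    have hcol : ∀ l ∈ insert a s, col a ≠ row l := h a (Finset.mem_insert_self a s)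
    have hmul : single (row a) (col a) (c a) * ∑ k ∈ s, single (row k) (col k) (c k) = 0 := by
      rw [Finset.mul_sum]
      exact Finset.sum_eq_zero fun l hl =>
        single_mul_single_of_ne _ _ _ _ (hcol l (Finset.mem_insert_of_mem hl)) _
    have hfactor : 1 + ∑ k ∈ insert a s, single (row k) (col k) (c k) =
        (1 + single (row a) (col a) (c a)) * (1 + ∑ k ∈ s, single (row k) (col k) (c k)) := by
      rw [Finset.sum_insert ha, mul_add, add_mul, add_mul, hmul, one_mul, mul_one, one_mul,
        add_zero, add_assoc]
    rw [hfactor]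
    exact Submonoid.mul_mem _
      (Submonoid.subset_closure ⟨_, _, _, (hcol a (Finset.mem_insert_self a s)).symm, rfl⟩) (ih hs)

theorem mem_closure_transvections_of_eq_one_off_row_col {a b : ι} (hab : a ≠ b)
    (M : Matrix ι ι R) (hoff : ∀ i j, i ≠ a → j ≠ b → M i j = (1 : Matrix ι ι R) i j)
    (haa : M a a = 1) (hbb : M b b = 1) :
    M ∈ Submonoid.closure (transvections ι R) := by
  set X := ∑ i ∈ (Finset.univ.erase a).erase b, single i b (M i b) with hX
  set Y := ∑ j ∈ Finset.univ.erase a, single a j (M a j) with hY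
  have hXY : X * Y = 0 := by
    rw [Finset.sum_mul_sum]
    exact Finset.sum_eq_zero fun i _ => Finset.sum_eq_zero fun j _ =>
      single_mul_single_of_ne _ _ _ _ hab.symm _
  have hM : M = (1 + X) * (1 + Y) := by
    rw [mul_add, add_mul, add_mul, hXY, one_mul, mul_one, one_mul, add_zero, add_assoc]
    ext i j
    simp only [hX, hY, Matrix.add_apply, Matrix.sum_apply, single_apply, ite_and,
      Finset.sum_ite_eq', Finset.sum_ite_irrel, Finset.sum_const_zero, Finset.mem_erase,
      Finset.mem_univ, and_true]
    rcases eq_or_ne i a with rfl | hi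
    · rcases eq_or_ne j i with rfl | hj
      · simp [haa, hab]
      · simp [one_apply_ne' hj, hj]
    rcases eq_or_ne j b with rfl | hj
    · rcases eq_or_ne i j with rfl | hib
      · simp [hbb, hab]
      · simp [one_apply_ne hib, hi, hib, hi.symm]
    · simp [hoff i j hi hj, hi.symm, hj.symm]
  rw [hM]
  refine Submonoid.mul_mem _ (one_add_sum_single_mem_closure_transvections _ id (fun _ => b) _ ?_)
    (one_add_sum_single_mem_closure_transvections _ (fun _ => a) id _ ?_)
  · intro k _ l hl
    exact (Finset.ne_of_mem_erase hl).symm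
  · intro k hk _ _
    exact Finset.ne_of_mem_erase hk

end Transvections

end Matrix

namespace OddUnitary

variable {R : Type*} [CommRing R]

theorem PsiM_row_zero (P : PseudoInv R) {n m : ℕ} (hm : 1 ≤ m) (φ : Matrix (Fin n) (Fin n) R) :
    PsiM P φ m ⟨0, by omega⟩ = Pi.single ⟨1, by omega⟩ 1 := by
  ext k
  simp only [PsiM, psiEnt, Pi.single_apply, Fin.ext_iff, zero_add, Nat.zero_mod, and_true]
  split_ifs <;> first | rfl | omega | simp_all

theorem rhoM_row_zero (P : PseudoInv R) {n m : ℕ} (hm : 1 ≤ m) (φ : Matrix (Fin n) (Fin n) R)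
    (j : Fin (n + 2*m - 1)) : rhoM P φ m ⟨0, by omega⟩ j = 0 :=
  inv_apply_eq_zero_of_row_eq_single (PsiM_row_zero P hm φ) (by simp [Fin.ext_iff])

theorem betaM_apply (P : PseudoInv R) {n : ℕ} (φ : Matrix (Fin n) (Fin n) R) (m : ℕ)
    (v : Fin (n + 2*m - 1) → R) (i j : Fin (n + 2*m - 1)) :
    betaM P φ m v i j =
      (1 : Matrix _ _ R) i j - P.i * (rhoM P φ m *ᵥ fun k => P.sigma (v k)) i * crow R n m j := by
  simp [betaM, vecMulVec_apply, mul_assoc]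

theorem Lstar_apply_of_ne (P : PseudoInv R) {n m : ℕ} (φ : Matrix (Fin n) (Fin n) R)
    (v : Fin (n + 2*m - 1) → R) {i j : Fin (n + 2*m)} (hi : (i : ℕ) ≠ 0) (hj : (j : ℕ) ≠ 1) :
    Lstar P φ m v i j = (1 : Matrix _ _ R) i j := by
  simp only [Lstar, betaM_apply, crow, dif_neg hi, one_apply, Fin.ext_iff]
  split_ifs <;> first | omega | ring

theorem Lstar_one_one (P : PseudoInv R) {n m : ℕ} (hm : 1 ≤ m) (φ : Matrix (Fin n) (Fin n) R)
    (v : Fin (n + 2*m - 1) → R) : Lstar P φ m v ⟨1, by omega⟩ ⟨1, by omega⟩ = 1 := by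
  have hρv : (rhoM P φ m *ᵥ fun k => P.sigma (v k)) ⟨0, by omega⟩ = 0 := by
    simp [mulVec, dotProduct, rhoM_row_zero P hm]
  simp [Lstar, betaM_apply, hρv]

theorem Lstar_mem_elementarySubgroup_general {R : Type*} [CommRing R] (P : PseudoInv R)
    {n m : ℕ} (hm : 2 ≤ m)
    (φ : Matrix (Fin n) (Fin n) R)
    (v : Fin (n + 2*m - 1) → R) :
    ∃ l : List (Matrix (Fin (n + 2*m)) (Fin (n + 2*m)) R),
      (∀ A ∈ l, ∃ (i j : Fin (n + 2*m)) (r : R),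
        i ≠ j ∧ A = 1 + Matrix.single i j r) ∧
      l.prod = Lstar P φ m v := by
  have hLstar : Lstar P φ m v ∈ Submonoid.closure (transvections _ R) :=
    mem_closure_transvections_of_eq_one_off_row_col (a := ⟨0, by omega⟩) (b := ⟨1, by omega⟩)
      (by simp [Fin.ext_iff]) _
      (fun i j hi hj => Lstar_apply_of_ne P φ v (by simpa [Fin.ext_iff] using hi)
        (by simpa [Fin.ext_iff] using hj))
      (by simp [Lstar]) (Lstar_one_one P (by omega) φ v)
  exact Submonoid.exists_list_of_mem_closure hLstar

/-- for every `v ∈ R^{n+2m-1}`, the Vaserstein-type matrix `L(v)*` lies in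
`E_{n+2m}(R)`, i.e. `L(v)*` is a product of elementary matrices. -/
theorem Lstar_mem_elementarySubgroup {R : Type*} [CommRing R] (P : PseudoInv R)
    {n m : ℕ} (hn : 1 ≤ n) (hm : 2 ≤ m)
    (φ : Matrix (Fin n) (Fin n) R) (hφ : IsUnit φ.det)
    (v : Fin (n + 2*m - 1) → R) :
    ∃ l : List (Matrix (Fin (n + 2*m)) (Fin (n + 2*m)) R),
      (∀ A ∈ l, ∃ (i j : Fin (n + 2*m)) (r : R),
        i ≠ j ∧ A = 1 + Matrix.single i j r) ∧
      l.prod = Lstar P φ m v :=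
  Lstar_mem_elementarySubgroup_general P hm φ v

end OddUnitary
end

section
/- For every v = (a₁, …, a_{n+2m−1}) ∈ R^{n+2m−1} (no condition on v) and every column vector w = (w₁, …, w_{n+2m}) ∈ R^{n+2m}, setting u = L(v)·w − w and a = B(w − L(v)·w, w), one has a − ā = 1̄⁻¹·w̄₁·(ā₁ − a₁)·w₁ and B(u, u) = 1̄⁻¹·w̄₁·q(a₂, …, a_{n+2m−1})·w₁, where q(a₂, …, a_{n+2m−1}) = 1̄⁻¹·(ā₂, …, ā_{n+2m−1})·(ψ̃_{m−1} ⊥ φ)·(a₂, …, a_{n+2m−1})ᵗ. -/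
open Matrix BigOperators

namespace OddUnitary

variable {R : Type*} [CommRing R]

/-! ### Auxiliary lemmas for the proof of `Lmat_defect_formulas` -/

section Aux

lemma rsplit1 {A : Type*} [AddCommMonoid A] {N : ℕ} (hN : 1 ≤ N) (g : ℕ → A) :
    ∑ i ∈ Finset.range N, g i = g 0 + ∑ i ∈ Finset.range (N - 1), g (i + 1) := by
  obtain ⟨K, rfl⟩ : ∃ K, N = K + 1 := ⟨N - 1, by omega⟩
  rw [Finset.sum_range_succ', add_comm, Nat.add_sub_cancel]

lemma rsplit2 {A : Type*} [AddCommMonoid A] {N : ℕ} (hN : 2 ≤ N) (g : ℕ → A) :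
    ∑ i ∈ Finset.range N, g i = g 0 + g 1 + ∑ i ∈ Finset.range (N - 2), g (i + 2) := by
  obtain ⟨K, rfl⟩ : ∃ K, N = K + 2 := ⟨N - 2, by omega⟩
  rw [Finset.sum_range_succ', Finset.sum_range_succ']
  show (∑ i ∈ Finset.range K, g (i+1+1) + g (0+1)) + g 0 = _
  rw [add_comm, add_comm (∑ i ∈ Finset.range K, g (i+1+1)) (g (0+1)), ← add_assoc]
  rfl

lemma finsum_eq {M : ℕ} (f : Fin M → R) (g : ℕ → R)
    (h : ∀ k (hk : k < M), f ⟨k, hk⟩ = g k) :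
    ∑ i, f i = ∑ i ∈ Finset.range M, g i := by
  rw [← Fin.sum_univ_eq_sum_range]
  exact Finset.sum_congr rfl fun i _ => h i i.isLt

/-- Extension of a `Fin M`-indexed vector to `ℕ` by zero. -/
def Vx {M : ℕ} (v : Fin M → R) : ℕ → R :=
  fun k => if h : k < M then v ⟨k, h⟩ else 0

variable (P : PseudoInv R) {n : ℕ} (φ : Matrix (Fin n) (Fin n) R)

lemma psiEnt_row_one {s : ℕ} (hs : 2 ≤ s) (j : ℕ) :
    psiEnt P φ s 1 j = if j = 0 then -(P.sigma 1) else 0 := by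
  unfold psiEnt
  split_ifs <;> first | rfl | omega | (exfalso; omega) | simp_all

lemma psiEnt_col_zero {s : ℕ} (hs : 2 ≤ s) {i : ℕ} (hi : 2 ≤ i) :
    psiEnt P φ s i 0 = 0 := by
  unfold psiEnt
  split_ifs <;> first | rfl | omega | (exfalso; omega) | simp_all

lemma psiEnt_col_one {s : ℕ} (hs : 2 ≤ s) {i : ℕ} (hi : 2 ≤ i) :
    psiEnt P φ s i 1 = 0 := by
  unfold psiEnt
  split_ifs <;> first | rfl | omega | (exfalso; omega) | simp_all

lemma psiEnt_shift {s : ℕ} (hs : 2 ≤ s) (i j : ℕ) :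
    psiEnt P φ s (i + 2) (j + 2) = psiEnt P φ (s - 2) i j := by
  unfold psiEnt
  split_ifs <;> first
  | rfl | omega | (exfalso; omega)
  | (congr 1 <;> (apply Fin.ext; simp; omega)) | simp_all

variable {m : ℕ} (v : Fin (n + 2*m - 1) → R) (w : Fin (n + 2*m) → R)

/-- `S = v̄·μ·(w₂, …)ᵗ`, in `ℕ`-indexed form. -/
def SN : R :=
  ∑ p ∈ Finset.range (n + 2*m - 1), ∑ q ∈ Finset.range (n + 2*m - 1),
    P.sigma (Vx v p) * psiEnt P φ (2*m) (p + 1) (q + 1) * Vx w (q + 1)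

/-- `T = (v̄₂, …)·(ψ̃_{m-1} ⊥ φ)·(w₃, …)ᵗ`, in `ℕ`-indexed form. -/
def TN : R :=
  ∑ p ∈ Finset.range (n + 2*m - 2), ∑ q ∈ Finset.range (n + 2*m - 2),
    P.sigma (Vx v (p + 1)) * psiEnt P φ (2*m - 2) p q * Vx w (q + 2)

/-- The vector `u = L(v)·w - w`, in `ℕ`-indexed form. -/
def UN : ℕ → R :=
  fun k => if k = 0 then 0
    else Vx v (k - 1) * Vx w 0 + (if k = 1 then -(P.i * SN P φ v w) else 0)

lemma Bform_eq_range (x y : Fin (n + 2*m) → R) :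
    Bform P φ m x y = ∑ i ∈ Finset.range (n + 2*m), ∑ j ∈ Finset.range (n + 2*m),
      P.sigma (Vx x i) * P.i * psiEnt P φ (2*m) i j * Vx y j := by
  unfold Bform
  refine finsum_eq _ _ fun i hi => ?_
  refine finsum_eq _ _ fun j hj => ?_
  simp [Vx, PsiM, hi, hj]

lemma alphaM_eq_s4 (p q : Fin (n + 2*m - 1)) :
    alphaM P φ m v p q = (if (p:ℕ) = (q:ℕ) then 1 else 0) +
      (if (p:ℕ) = 0 then -P.i else 0) *
        ∑ r ∈ Finset.range (n + 2*m - 1),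
          P.sigma (Vx v r) * psiEnt P φ (2*m) (r + 1) ((q:ℕ) + 1) := by
  unfold alphaM
  rw [Matrix.add_apply, Matrix.one_apply, Matrix.mul_apply]
  congr 1
  · simp [Fin.ext_iff]
  · simp only [Matrix.vecMulVec_apply, drow, mul_assoc]
    rw [← Finset.mul_sum]
    congr 1
    refine finsum_eq _ _ fun r hr => ?_
    simp [Vx, muM, hr]

lemma Lw_eq (hn : 1 ≤ n) (hm : 2 ≤ m) (k : Fin (n + 2*m)) :
    (Lmat P φ m v *ᵥ w) k = w k + UN P φ v w (k : ℕ) := by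
  have hk := k.isLt
  have hN0 : 0 < n + 2*m := by omega
  have hmul : (Lmat P φ m v *ᵥ w) k = ∑ j : Fin (n + 2*m), Lmat P φ m v k j * w j := by
    simp [Matrix.mulVec, dotProduct]
  by_cases hk0 : (k : ℕ) = 0
  · rw [hmul, finsum_eq _ (fun j => (if j = 0 then 1 else 0) * Vx w j)
      (fun j hj => by simp [Lmat, hk0, Vx, hj]), rsplit1 (by omega)]
    have hkk : k = ⟨0, hN0⟩ := Fin.ext hk0
    subst hkk
    simp [UN, Vx, hN0]
  · have hkm : (k:ℕ) - 1 < n + 2*m - 1 := by omega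
    rw [hmul, finsum_eq _ (fun j => if j = 0 then Vx v ((k:ℕ) - 1) * Vx w j
        else ((if (k:ℕ) - 1 = j - 1 then 1 else 0) +
          (if (k:ℕ) - 1 = 0 then -P.i else 0) *
            ∑ r ∈ Finset.range (n + 2*m - 1),
              P.sigma (Vx v r) * psiEnt P φ (2*m) (r + 1) ((j - 1) + 1)) * Vx w j)
      (fun j hj => ?_), rsplit1 (by omega)]
    swap
    · by_cases hj0 : j = 0
      · subst hj0
        simp [Lmat, hk0, Vx, hj, hkm]
      · have : Lmat P φ m v k ⟨j, hj⟩
            = alphaM P φ m v ⟨(k:ℕ) - 1, by omega⟩ ⟨j - 1, by omega⟩ := by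
          simp [Lmat, hk0, hj0]
        rw [this, alphaM_eq_s4]
        simp [Vx, hj, hj0]
    · simp only [Nat.succ_ne_zero, Nat.add_sub_cancel, eq_self_iff_true, if_true, if_false]
      rw [show (∑ j ∈ Finset.range (n + 2*m - 1),
            ((if (k:ℕ) - 1 = j then 1 else 0) +
              (if (k:ℕ) - 1 = 0 then -P.i else 0) *
                ∑ r ∈ Finset.range (n + 2*m - 1),
                  P.sigma (Vx v r) * psiEnt P φ (2*m) (r + 1) (j + 1)) * Vx w (j + 1))
          = (∑ j ∈ Finset.range (n + 2*m - 1),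
              (if (k:ℕ) - 1 = j then 1 else 0) * Vx w (j + 1))
            + ∑ j ∈ Finset.range (n + 2*m - 1),
              ((if (k:ℕ) - 1 = 0 then -P.i else 0) *
                ∑ r ∈ Finset.range (n + 2*m - 1),
                  P.sigma (Vx v r) * psiEnt P φ (2*m) (r + 1) (j + 1)) * Vx w (j + 1)
        from by rw [← Finset.sum_add_distrib]; exact Finset.sum_congr rfl fun j _ => by ring]
      have h1 : (∑ j ∈ Finset.range (n + 2*m - 1),
          (if (k:ℕ) - 1 = j then 1 else 0) * Vx w (j + 1)) = w k := by
        simp only [ite_mul, one_mul, zero_mul]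
        rw [Finset.sum_ite_eq, if_pos (Finset.mem_range.mpr hkm),
          show (k:ℕ) - 1 + 1 = (k:ℕ) from by omega]
        simp [Vx, hk]
      have h2 : (∑ j ∈ Finset.range (n + 2*m - 1),
          ((if (k:ℕ) - 1 = 0 then -P.i else 0) *
            ∑ r ∈ Finset.range (n + 2*m - 1),
              P.sigma (Vx v r) * psiEnt P φ (2*m) (r + 1) (j + 1)) * Vx w (j + 1))
          = (if (k:ℕ) = 1 then -(P.i * SN P φ v w) else 0) := by
        have hc : (∑ j ∈ Finset.range (n + 2*m - 1),
            ((if (k:ℕ) - 1 = 0 then -P.i else 0) *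
              ∑ r ∈ Finset.range (n + 2*m - 1),
                P.sigma (Vx v r) * psiEnt P φ (2*m) (r + 1) (j + 1)) * Vx w (j + 1))
            = (if (k:ℕ) - 1 = 0 then -P.i else 0) * SN P φ v w := by
          unfold SN
          simp only [Finset.mul_sum]
          rw [show (∑ j ∈ Finset.range (n + 2*m - 1),
              (∑ r ∈ Finset.range (n + 2*m - 1), (if (k:ℕ) - 1 = 0 then -P.i else 0) *
                (P.sigma (Vx v r) * psiEnt P φ (2*m) (r + 1) (j + 1))) * Vx w (j + 1))
            = ∑ j ∈ Finset.range (n + 2*m - 1), ∑ r ∈ Finset.range (n + 2*m - 1),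
              ((if (k:ℕ) - 1 = 0 then -P.i else 0) *
                (P.sigma (Vx v r) * psiEnt P φ (2*m) (r + 1) (j + 1))) * Vx w (j + 1)
            from Finset.sum_congr rfl fun j _ => Finset.sum_mul _ _ _]
          rw [Finset.sum_comm]
          exact Finset.sum_congr rfl fun r _ => Finset.sum_congr rfl fun j _ => by ring
        rw [hc]
        by_cases h1k : (k:ℕ) = 1
        · rw [if_pos (by omega), if_pos h1k]; ring
        · rw [if_neg (by omega), if_neg h1k, zero_mul]
      rw [h1, h2, UN, if_neg hk0]
      ring

lemma UN_zero : UN P φ v w 0 = 0 := by simp [UN]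

lemma UN_one : UN P φ v w 1 = Vx v 0 * Vx w 0 + -(P.i * SN P φ v w) := by
  simp [UN]

lemma UN_ge2 {k : ℕ} (hk : 2 ≤ k) : UN P φ v w k = Vx v (k - 1) * Vx w 0 := by
  unfold UN
  rw [if_neg (by omega), if_neg (by omega), add_zero]

lemma SN_eq_TN (hn : 1 ≤ n) (hm : 2 ≤ m) : SN P φ v w = TN P φ v w := by
  unfold SN TN
  rw [rsplit1 (by omega)]
  rw [show (∑ q ∈ Finset.range (n + 2*m - 1),
      P.sigma (Vx v 0) * psiEnt P φ (2*m) (0 + 1) (q + 1) * Vx w (q + 1)) = 0 from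
    Finset.sum_eq_zero fun q _ => by
      rw [show (0 + 1 : ℕ) = 1 from rfl, psiEnt_row_one P φ (by omega),
        if_neg (Nat.succ_ne_zero _)]
      ring, zero_add]
  rw [show n + 2*m - 1 - 1 = n + 2*m - 2 from by omega]
  refine Finset.sum_congr rfl fun p hp => ?_
  rw [rsplit1 (by omega)]
  rw [show n + 2*m - 1 - 1 = n + 2*m - 2 from by omega]
  rw [show P.sigma (Vx v (p + 1)) * psiEnt P φ (2*m) (p + 1 + 1) (0 + 1) * Vx w (0 + 1) = 0 from by
    rw [show (0 + 1 : ℕ) = 1 from rfl, psiEnt_col_one P φ (by omega) (by omega)]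
    ring, zero_add]
  refine Finset.sum_congr rfl fun q hq => ?_
  rw [show p + 1 + 1 = p + 2 from rfl, show q + 1 + 1 = q + 2 from rfl,
    psiEnt_shift P φ (by omega)]

lemma Bform_Uw (hn : 1 ≤ n) (hm : 2 ≤ m) :
    Bform P φ m (fun k => UN P φ v w (k : ℕ)) w
      = P.sigma (UN P φ v w 1) * P.i * (-(P.sigma 1)) * Vx w 0
        + P.i * P.i * P.sigma (Vx w 0) * TN P φ v w := by
  rw [Bform_eq_range]
  rw [show (∑ i ∈ Finset.range (n + 2*m), ∑ j ∈ Finset.range (n + 2*m),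
        P.sigma (Vx (fun k : Fin (n + 2*m) => UN P φ v w (k : ℕ)) i) * P.i *
          psiEnt P φ (2*m) i j * Vx w j)
      = ∑ i ∈ Finset.range (n + 2*m), ∑ j ∈ Finset.range (n + 2*m),
        P.sigma (UN P φ v w i) * P.i * psiEnt P φ (2*m) i j * Vx w j from
    Finset.sum_congr rfl fun i hi => Finset.sum_congr rfl fun j hj => by
      rw [show Vx (fun k : Fin (n + 2*m) => UN P φ v w (k : ℕ)) i = UN P φ v w i from by
        simp [Vx, Finset.mem_range.mp hi]]]
  rw [rsplit2 (by omega)]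
  rw [show (∑ j ∈ Finset.range (n + 2*m),
      P.sigma (UN P φ v w 0) * P.i * psiEnt P φ (2*m) 0 j * Vx w j) = 0 from
    Finset.sum_eq_zero fun j _ => by simp [UN]]
  rw [show (∑ j ∈ Finset.range (n + 2*m),
      P.sigma (UN P φ v w 1) * P.i * psiEnt P φ (2*m) 1 j * Vx w j)
      = P.sigma (UN P φ v w 1) * P.i * (-(P.sigma 1)) * Vx w 0 from by
    rw [rsplit1 (by omega), psiEnt_row_one P φ (by omega), if_pos rfl]
    rw [Finset.sum_eq_zero fun j (_ : j ∈ Finset.range (n + 2*m - 1)) => by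
      rw [psiEnt_row_one P φ (by omega), if_neg (Nat.succ_ne_zero _)]; ring, add_zero]]
  rw [show (∑ i ∈ Finset.range (n + 2*m - 2), ∑ j ∈ Finset.range (n + 2*m),
        P.sigma (UN P φ v w (i + 2)) * P.i * psiEnt P φ (2*m) (i + 2) j * Vx w j)
      = P.i * P.i * P.sigma (Vx w 0) * TN P φ v w from by
    unfold TN
    simp only [Finset.mul_sum]
    refine Finset.sum_congr rfl fun i hi => ?_
    rw [rsplit2 (by omega)]
    rw [psiEnt_col_zero P φ (by omega) (by omega), psiEnt_col_one P φ (by omega) (by omega),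
      UN_ge2 P φ v w (by omega), show i + 2 - 1 = i + 1 from rfl]
    simp only [mul_zero, zero_mul, zero_add, add_zero]
    refine Finset.sum_congr rfl fun j hj => ?_
    rw [psiEnt_shift P φ (by omega), P.bar_mul]
    ring]
  ring

lemma Bform_UU (hn : 1 ≤ n) (hm : 2 ≤ m) :
    Bform P φ m (fun k => UN P φ v w (k : ℕ)) (fun k => UN P φ v w (k : ℕ))
      = P.i * P.sigma (Vx w 0) * qform P φ m v * Vx w 0 := by
  rw [Bform_eq_range]
  rw [show (∑ i ∈ Finset.range (n + 2*m), ∑ j ∈ Finset.range (n + 2*m),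
        P.sigma (Vx (fun k : Fin (n + 2*m) => UN P φ v w (k : ℕ)) i) * P.i *
          psiEnt P φ (2*m) i j * Vx (fun k : Fin (n + 2*m) => UN P φ v w (k : ℕ)) j)
      = ∑ i ∈ Finset.range (n + 2*m), ∑ j ∈ Finset.range (n + 2*m),
        P.sigma (UN P φ v w i) * P.i * psiEnt P φ (2*m) i j * UN P φ v w j from
    Finset.sum_congr rfl fun i hi => Finset.sum_congr rfl fun j hj => by
      rw [show Vx (fun k : Fin (n + 2*m) => UN P φ v w (k : ℕ)) i = UN P φ v w i from by
        simp [Vx, Finset.mem_range.mp hi],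
        show Vx (fun k : Fin (n + 2*m) => UN P φ v w (k : ℕ)) j = UN P φ v w j from by
        simp [Vx, Finset.mem_range.mp hj]]]
  rw [rsplit2 (by omega)]
  rw [show (∑ j ∈ Finset.range (n + 2*m),
      P.sigma (UN P φ v w 0) * P.i * psiEnt P φ (2*m) 0 j * UN P φ v w j) = 0 from
    Finset.sum_eq_zero fun j _ => by simp [UN]]
  rw [show (∑ j ∈ Finset.range (n + 2*m),
      P.sigma (UN P φ v w 1) * P.i * psiEnt P φ (2*m) 1 j * UN P φ v w j) = 0 from by
    rw [rsplit1 (by omega), psiEnt_row_one P φ (by omega), if_pos rfl]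
    rw [Finset.sum_eq_zero fun j (_ : j ∈ Finset.range (n + 2*m - 1)) => by
      rw [psiEnt_row_one P φ (by omega), if_neg (Nat.succ_ne_zero _)]; ring, add_zero]
    rw [UN_zero]
    ring]
  rw [show qform P φ m v
      = P.i * ∑ i ∈ Finset.range (n + 2*m - 2), ∑ j ∈ Finset.range (n + 2*m - 2),
          P.sigma (Vx v (i + 1)) * psiEnt P φ (2*m - 2) i j * Vx v (j + 1) from by
    unfold qform
    congr 1
    refine finsum_eq _ _ fun i hi => ?_
    refine finsum_eq _ _ fun j hj => ?_
    simp [Vx, show i + 1 < n + 2*m - 1 from by omega, show j + 1 < n + 2*m - 1 from by omega]]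
  rw [show (∑ i ∈ Finset.range (n + 2*m - 2), ∑ j ∈ Finset.range (n + 2*m),
        P.sigma (UN P φ v w (i + 2)) * P.i * psiEnt P φ (2*m) (i + 2) j * UN P φ v w j)
      = ∑ i ∈ Finset.range (n + 2*m - 2), ∑ j ∈ Finset.range (n + 2*m - 2),
        P.sigma (Vx v (i + 1) * Vx w 0) * P.i * psiEnt P φ (2*m - 2) i j *
          (Vx v (j + 1) * Vx w 0) from
    Finset.sum_congr rfl fun i hi => by
      rw [rsplit2 (by omega)]
      rw [psiEnt_col_zero P φ (by omega) (by omega), psiEnt_col_one P φ (by omega) (by omega),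
        UN_ge2 P φ v w (by omega), show i + 2 - 1 = i + 1 from rfl]
      simp only [mul_zero, zero_mul, zero_add, add_zero]
      refine Finset.sum_congr rfl fun j hj => ?_
      rw [psiEnt_shift P φ (by omega), UN_ge2 P φ v w (by omega),
        show j + 2 - 1 = j + 1 from rfl]]
  simp only [Finset.mul_sum, Finset.sum_mul]
  rw [zero_add, zero_add]
  refine Finset.sum_congr rfl fun i _ => Finset.sum_congr rfl fun j _ => ?_
  rw [P.bar_mul]
  ring

lemma Bform_neg (x y : Fin (n + 2*m) → R) :
    Bform P φ m (fun k => -(x k)) y = -Bform P φ m x y := by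
  unfold Bform
  rw [← Finset.sum_neg_distrib]
  refine Finset.sum_congr rfl fun i _ => ?_
  rw [← Finset.sum_neg_distrib]
  refine Finset.sum_congr rfl fun j _ => ?_
  rw [map_neg]
  ring

end Aux

/-- for every `v` (no condition) and every `w`, with `u = L(v)·w - w` and
`a = B(w - L(v)·w, w)`, one has `a - ā = 1̄⁻¹·w̄₁·(ā₁ - a₁)·w₁` and
`B(u, u) = 1̄⁻¹·w̄₁·q(a₂, …, a_{n+2m-1})·w₁`. -/
theorem Lmat_defect_formulas {R : Type*} [CommRing R] (P : PseudoInv R)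
    {n m : ℕ} (hn : 1 ≤ n) (hm : 2 ≤ m)
    (φ : Matrix (Fin n) (Fin n) R) (hφ : IsUnit φ.det)
    (hφa : φ = -((φ.map ⇑P.sigma)ᵀ))
    (v : Fin (n + 2*m - 1) → R) :
    ∀ w : Fin (n + 2*m) → R,
      (Bform P φ m (w - Lmat P φ m v *ᵥ w) w
          - P.sigma (Bform P φ m (w - Lmat P φ m v *ᵥ w) w)
        = P.i * P.sigma (w ⟨0, by omega⟩) *
            (P.sigma (v ⟨0, by omega⟩) - v ⟨0, by omega⟩) * w ⟨0, by omega⟩)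
      ∧ (Bform P φ m (Lmat P φ m v *ᵥ w - w) (Lmat P φ m v *ᵥ w - w)
        = P.i * P.sigma (w ⟨0, by omega⟩) * qform P φ m v * w ⟨0, by omega⟩) := by
  intro w
  have hsub1 : (w - Lmat P φ m v *ᵥ w) = (fun k : Fin (n + 2*m) => -(UN P φ v w (k : ℕ))) :=
    funext fun k => by rw [Pi.sub_apply, Lw_eq P φ v w hn hm k]; ring
  have hsub2 : (Lmat P φ m v *ᵥ w - w) = (fun k : Fin (n + 2*m) => UN P φ v w (k : ℕ)) :=
    funext fun k => by rw [Pi.sub_apply, Lw_eq P φ v w hn hm k]; ring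
  have hσi : P.sigma P.i = P.sigma 1 * P.sigma 1 := by
    have h1 : P.i * P.sigma P.i = P.sigma 1 := by
      have h2 := congrArg P.sigma P.i_mul_bar_one
      rw [P.bar_mul, P.bar_bar] at h2
      simpa using h2
    calc P.sigma P.i = (P.sigma 1 * P.i) * P.sigma P.i := by rw [P.bar_one_mul_i, one_mul]
      _ = P.sigma 1 * (P.i * P.sigma P.i) := by ring
      _ = P.sigma 1 * P.sigma 1 := by rw [h1]
  have hw0 : Vx w 0 = w ⟨0, by omega⟩ := by
    simp [Vx, show 0 < n + 2*m from by omega]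
  have hv0 : Vx v 0 = v ⟨0, by omega⟩ := by
    simp [Vx, show 0 < n + 2*m - 1 from by omega]
  constructor
  · rw [hsub1, Bform_neg, Bform_Uw P φ v w hn hm, UN_one, SN_eq_TN P φ v w hn hm, hw0, hv0]
    simp only [map_neg, map_add, P.bar_mul, P.bar_bar, hσi]
    linear_combination
      (P.i * P.sigma (v ⟨0, by omega⟩) * P.sigma (w ⟨0, by omega⟩) * w ⟨0, by omega⟩
        - P.i^4 * (P.sigma 1)^3 * v ⟨0, by omega⟩ * P.sigma (w ⟨0, by omega⟩) * w ⟨0, by omega⟩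
        + P.i^5 * (P.sigma 1)^3 * P.sigma (w ⟨0, by omega⟩) * TN P φ v w
        + P.i^2 * (P.sigma 1)^3 * w ⟨0, by omega⟩ * P.sigma (TN P φ v w)
        - P.i^3 * (P.sigma 1)^2 * v ⟨0, by omega⟩ * P.sigma (w ⟨0, by omega⟩) * w ⟨0, by omega⟩
        + P.i^4 * (P.sigma 1)^2 * P.sigma (w ⟨0, by omega⟩) * TN P φ v w
        - P.i^2 * P.sigma 1 * v ⟨0, by omega⟩ * P.sigma (w ⟨0, by omega⟩) * w ⟨0, by omega⟩
        + P.i^3 * P.sigma 1 * P.sigma (w ⟨0, by omega⟩) * TN P φ v w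
        - P.i * v ⟨0, by omega⟩ * P.sigma (w ⟨0, by omega⟩) * w ⟨0, by omega⟩
        + P.i^2 * P.sigma (w ⟨0, by omega⟩) * TN P φ v w) * P.i_mul_bar_one
  · rw [hsub2, Bform_UU P φ v w hn hm, hw0]

end OddUnitary
end

section
/- Let u = t₁v₁ + … + tₙvₙ + b₁e₁ + b₂e₂ + b₋₂e₋₂ + … + bₘeₘ + b₋ₘe₋ₘ (the coefficient of e₋₁ is 0) and a ∈ R. Then the transvection T₁(u, a) = T_{e₁, −u}(−a) is an R-linear map on V and its matrix with respect to the ordered basis (v₁, …, vₙ, e₁, e₋₁, e₂, e₋₂, …, eₘ, e₋ₘ) is M₁(u, a); that is, T₁(u, a)(w) = M₁(u, a)·w for every coordinate column vector w. -/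
open Matrix BigOperators

namespace OddUnitary

variable {R : Type*} [CommRing R]

/-!
Both sides are linear in `w`: writing `⟨x, w⟩ = ρ(x) ⬝ᵥ w` with the row vector
`ρ(x) = x̄ᵗ·1̄⁻¹·G`, the transvection `T_{x,y}(r)` is the matrix
`1 + x·1̄⁻¹·(ρ(y) + r·ρ(x)) + y·ρ(x)`. Here `ρ(e₁) = e₋₁ᵗ`, and outside the `φ` block every
column of `G = φ ⊥ ψ̃ₘ` has a single nonzero entry, which makes `ρ(u)` explicit; comparing
entries with `M₁(u, a)` then only uses `b₋₁ = 0` and `1̄⁻¹·1̄ = 1`.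
-/

section FormRow

variable (P : PseudoInv R) {n : ℕ} (φ : Matrix (Fin n) (Fin n) R)

def formRow (m : ℕ) (x : Fin (n + 2*m) → R) : Fin (n + 2*m) → R :=
  (fun i => P.sigma (x i) * P.i) ᵥ* GM P φ m

variable {m : ℕ}

lemma formV_eq_formRow_dotProduct (x w : Fin (n + 2*m) → R) :
    formV P φ m x w = formRow P φ m x ⬝ᵥ w := by
  simp only [formV, formRow, dotProduct, vecMul, Finset.sum_mul]
  rw [Finset.sum_comm]

lemma formRow_neg (x : Fin (n + 2*m) → R) : formRow P φ m (-x) = -formRow P φ m x := by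
  simp only [formRow, Pi.neg_apply, map_neg, neg_mul]
  exact neg_vecMul _ _

lemma ESD_eq_mulVec (x y : Fin (n + 2*m) → R) (r : R) (w : Fin (n + 2*m) → R) :
    ESD P φ m x y r w = (1 + vecMulVec x (P.i • (formRow P φ m y + r • formRow P φ m x))
      + vecMulVec y (formRow P φ m x)) *ᵥ w := by
  ext k
  simp only [ESD, formV_eq_formRow_dotProduct, add_mulVec, one_mulVec, vecMulVec_mulVec,
    Pi.add_apply, Pi.smul_apply, smul_eq_mul, op_smul_eq_smul, add_dotProduct, smul_dotProduct]

lemma formRow_apply_of_col_single (x : Fin (n + 2*m) → R) {j : Fin (n + 2*m)} (k : Fin (n + 2*m))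
    (hcol : ∀ i, i ≠ k → GM P φ m i j = 0) :
    formRow P φ m x j = P.sigma (x k) * P.i * GM P φ m k j :=
  Fintype.sum_eq_single k fun i hi => mul_eq_zero_of_right _ (hcol i hi)

lemma formRow_apply_of_lt (x : Fin (n + 2*m) → R) {j : Fin (n + 2*m)} (hj : (j : ℕ) < n) :
    formRow P φ m x j =
      P.i * ∑ l : Fin n, P.sigma (x ⟨l, by omega⟩) * φ l ⟨j, hj⟩ := by
  rw [formRow, vecMul, dotProduct, Fin.sum_univ_add, Finset.mul_sum]
  have hvanish : ∀ l : Fin (2*m), GM P φ m (Fin.natAdd n l) j = 0 := fun l => by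
    simp only [GM, gEnt, Fin.val_natAdd]
    split_ifs <;> first | rfl | omega
  simp only [hvanish, mul_zero, Finset.sum_const_zero, add_zero]
  refine Finset.sum_congr rfl fun l _ => ?_
  simp only [Fin.castAdd, Fin.castLE, GM, gEnt, Fin.is_lt, hj, and_self, dite_true, Fin.eta]
  ring

lemma formRow_apply_of_even (x : Fin (n + 2*m) → R) {j : Fin (n + 2*m)} (hj : n ≤ (j : ℕ))
    (hpar : ((j : ℕ) - n) % 2 = 0) :
    formRow P φ m x j = -P.sigma (x ⟨j + 1, by omega⟩) := by
  rw [formRow_apply_of_col_single P φ x ⟨j + 1, by omega⟩ fun i hi => ?_]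
  · simp only [GM, gEnt, true_and]
    split_ifs <;> first | omega | rw [mul_neg, mul_assoc, P.i_mul_bar_one, mul_one]
  · have : (i : ℕ) ≠ j + 1 := fun h => hi (Fin.ext h)
    simp only [GM, gEnt]
    split_ifs <;> first | rfl | omega

lemma formRow_apply_of_odd (x : Fin (n + 2*m) → R) {j : Fin (n + 2*m)} (hj : n ≤ (j : ℕ))
    (hpar : ((j : ℕ) - n) % 2 = 1) :
    formRow P φ m x j = P.sigma (x ⟨j - 1, by omega⟩) * P.i := by
  rw [formRow_apply_of_col_single P φ x ⟨j - 1, by omega⟩ fun i hi => ?_]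
  · simp only [GM, gEnt]
    split_ifs <;> first | omega | rw [mul_one]
  · have : (i : ℕ) ≠ j - 1 := fun h => hi (Fin.ext h)
    simp only [GM, gEnt]
    split_ifs <;> first | rfl | omega

lemma formRow_e1vec (hm : 0 < m) : formRow P φ m (e1vec R n m) = eneg1vec R n m := by
  ext j
  rw [formRow, vecMul, dotProduct, Fintype.sum_eq_single ⟨n, by omega⟩ fun i hi => ?_]
  · simp only [e1vec, if_true, P.bar_one_mul_i, one_mul, eneg1vec, GM, gEnt]
    split_ifs <;> first | omega | rfl
  · have : (i : ℕ) ≠ n := fun h => hi (Fin.ext h)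
    simp [e1vec, this]

lemma M1_eq (hm : 0 < m) (u : Fin (n + 2*m) → R) (hu : u ⟨n + 1, by omega⟩ = 0) (a : R) :
    M1 P φ m u a = 1 - vecMulVec u (eneg1vec R n m)
      - vecMulVec (e1vec R n m) (P.i • (formRow P φ m u + a • eneg1vec R n m)) := by
  ext ⟨i, hi⟩ ⟨j, hj⟩
  simp only [Matrix.sub_apply, one_apply, vecMulVec_apply, Pi.add_apply, Pi.smul_apply,
    smul_eq_mul, e1vec, eneg1vec, Fin.mk.injEq]
  by_cases hcol : j = n + 1
  · subst j
    have hρ := formRow_apply_of_odd P φ u (j := ⟨n + 1, hj⟩) (by simp) (by simp)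
    simp only [Nat.add_sub_cancel] at hρ
    by_cases hin : i = n
    · subst i
      simp only [M1, dite_true, lt_self_iff_false, dite_false,
        Nat.left_eq_add, one_ne_zero, if_true, if_false, mul_one, zero_sub, hρ, one_mul]
      ring
    by_cases hin1 : i = n + 1
    · subst i
      simp [M1, hu]
    · simp [M1, hin, hin1]
  by_cases hrow : i = n
  · subst i
    simp only [M1, dif_neg hcol, if_neg hcol, if_true, mul_zero, add_zero, sub_zero, one_mul]
    rcases lt_or_ge j n with hjn | hjn
    · rw [formRow_apply_of_lt P φ u (j := ⟨j, hj⟩) hjn]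
      simp only [hjn, hjn.ne', dite_true, if_false, zero_sub, neg_inj]
      ring
    rcases Nat.mod_two_eq_zero_or_one (j - n) with hpar | hpar
    · rw [formRow_apply_of_even P φ u (j := ⟨j, hj⟩) hjn hpar]
      rcases hjn.eq_or_lt with rfl | hjn
      · simp [hu]
      · simp [hjn.not_gt, hjn.ne, hjn.ne', hpar]
    · rw [formRow_apply_of_odd P φ u (j := ⟨j, hj⟩) hjn hpar]
      have : j ≠ n := by omega
      simp only [hjn.not_gt, this, Ne.symm this, hpar, dite_false, dite_true, if_false, one_ne_zero,
        neg_mul, zero_sub, neg_inj]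
      ring
  · simp [M1, hcol, hrow]

end FormRow

/-- for `u = t₁v₁ + … + tₙvₙ + b₁e₁ + b₂e₂ + b₋₂e₋₂ + … + bₘeₘ + b₋ₘe₋ₘ`
(coefficient of `e₋₁` equal to `0`) and `a ∈ R`, the transvection
`T₁(u, a) = T_{e₁, -u}(-a)` acts on coordinate column vectors as the matrix `M₁(u, a)`:
`T₁(u, a)(w) = M₁(u, a)·w` for every `w` (in particular it is `R`-linear). -/
theorem T1_matrix {R : Type*} [CommRing R] (P : PseudoInv R)
    {n m : ℕ} (hm : 2 ≤ m)
    (φ : Matrix (Fin n) (Fin n) R)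
    (u : Fin (n + 2*m) → R) (hu : u ⟨n + 1, by omega⟩ = 0) (a : R) :
    ∀ w : Fin (n + 2*m) → R,
      ESD P φ m (e1vec R n m) (-u) (-a) w = M1 P φ m u a *ᵥ w := by
  intro w
  rw [ESD_eq_mulVec, M1_eq P φ (by omega) u hu a, formRow_e1vec P φ (by omega), formRow_neg]
  congr 1
  ext i j
  simp only [Matrix.add_apply, Matrix.sub_apply, vecMulVec_apply, Pi.add_apply, Pi.neg_apply,
    Pi.smul_apply, smul_eq_mul]
  ring

end OddUnitary
end

section
/- Let u = t₁v₁ + … + tₙvₙ + b₋₁e₋₁ + b₂e₂ + b₋₂e₋₂ + … + bₘeₘ + b₋ₘe₋ₘ (the coefficient of e₁ is 0) and a ∈ R. Then the transvection T₋₁(u, a) = T_{e₋₁, u·1̄⁻¹}(−a) is an R-linear map on V and its matrix with respect to the ordered basis (v₁, …, vₙ, e₁, e₋₁, e₂, e₋₂, …, eₘ, e₋ₘ) is M₋₁(u, a); that is, T₋₁(u, a)(w) = M₋₁(u, a)·w for every coordinate column vector w. -/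
open Matrix BigOperators

namespace OddUnitary

variable {R : Type*} [CommRing R]

/-!
Since `⟨x, w⟩ = (x̄·1̄⁻¹)ᵗ G w`, and the `e₋₁` row of `G` is `-1̄` at `e₁` and zero elsewhere,
`⟨e₋₁, w⟩ = -1̄·w_{e₁}` and `⟨u·1̄⁻¹, w⟩ = (ūᵗG)·w`. Hence
`T₋₁(u, a) = 1 + e₋₁·(1̄⁻¹·ūᵗG + a·e₁ᵗ) - u·e₁ᵗ`, a rank-two update of the identity. Each column of
the hyperbolic part of `G` has a single nonzero entry, which makes `ūᵗG` explicit, and comparing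
with `M₋₁(u, a)` entry by entry needs `b₁ = 0` only at the diagonal entries of `e₁` and `e₋₁`.
-/

namespace PseudoInv

variable (P : PseudoInv R)

lemma i_mul_sigma_i : P.i * P.sigma P.i = P.sigma 1 := by
  have h := P.bar_mul P.i (P.sigma 1)
  rwa [P.i_mul_bar_one, P.bar_bar, one_mul, eq_comm] at h

lemma sigma_i_mul_mul_i (r : R) : P.sigma (P.i * r) * P.i = P.sigma r := by
  rw [P.bar_mul]
  linear_combination P.sigma r * P.i * P.i_mul_sigma_i + P.sigma r * P.bar_one_mul_i

lemma sigma_single_one_mul_i {ι : Type*} [DecidableEq ι] (k : ι) :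
    (fun l => P.sigma ((Pi.single k 1 : ι → R) l) * P.i) = Pi.single k 1 := by
  ext l
  rcases eq_or_ne l k with rfl | hl
  · simp [P.bar_one_mul_i]
  · simp [hl]

end PseudoInv

section GramMatrix

variable (P : PseudoInv R) {n m : ℕ} (φ : Matrix (Fin n) (Fin n) R)

lemma e1vec_eq_single (hm : 1 ≤ m) : e1vec R n m = Pi.single ⟨n, by omega⟩ 1 := by
  ext l
  simp [e1vec, Pi.single_apply, Fin.ext_iff]

lemma eneg1vec_eq_single (hm : 1 ≤ m) : eneg1vec R n m = Pi.single ⟨n + 1, by omega⟩ 1 := by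
  ext l
  simp [eneg1vec, Pi.single_apply, Fin.ext_iff]

lemma GM_row_eneg1 (hm : 1 ≤ m) :
    (GM P φ m).row ⟨n + 1, by omega⟩ = Pi.single ⟨n, by omega⟩ (-P.sigma 1) := by
  ext j
  simp only [row, GM, gEnt, Pi.single_apply, Fin.ext_iff]
  split_ifs <;> first | rfl | omega

lemma GM_col_of_even {j : Fin (n + 2*m)} (hj : n ≤ j) (he : (j - n) % 2 = 0) :
    (GM P φ m).col j = Pi.single ⟨j + 1, by omega⟩ (-P.sigma 1) := by
  ext i
  simp only [col, transpose_apply, GM, gEnt, Pi.single_apply, Fin.ext_iff]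
  split_ifs <;> first | rfl | omega

lemma GM_col_of_odd {j : Fin (n + 2*m)} (hj : n ≤ j) (ho : (j - n) % 2 = 1) :
    (GM P φ m).col j = Pi.single ⟨j - 1, by omega⟩ 1 := by
  ext i
  simp only [col, transpose_apply, GM, gEnt, Pi.single_apply, Fin.ext_iff]
  split_ifs <;> first | rfl | omega

lemma vecMul_GM_of_lt (v : Fin (n + 2*m) → R) {j : Fin (n + 2*m)} (hj : (j : ℕ) < n) :
    (v ᵥ* GM P φ m) j = ∑ l : Fin n, v (Fin.castAdd (2*m) l) * φ l ⟨j, hj⟩ := by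
  simp only [vecMul, dotProduct, Fin.sum_univ_add, GM, gEnt, Fin.val_castAdd, Fin.val_natAdd]
  simp [hj]

lemma vecMul_GM_of_even (v : Fin (n + 2*m) → R) {j : Fin (n + 2*m)} (hj : n ≤ j)
    (he : (j - n) % 2 = 0) :
    (v ᵥ* GM P φ m) j = v ⟨j + 1, by omega⟩ * -P.sigma 1 := by
  change v ⬝ᵥ (GM P φ m).col j = _
  rw [GM_col_of_even P φ hj he, dotProduct_single]

lemma vecMul_GM_of_odd (v : Fin (n + 2*m) → R) {j : Fin (n + 2*m)} (hj : n ≤ j)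
    (ho : (j - n) % 2 = 1) :
    (v ᵥ* GM P φ m) j = v ⟨j - 1, by omega⟩ := by
  change v ⬝ᵥ (GM P φ m).col j = _
  rw [GM_col_of_odd P φ hj ho, dotProduct_single_one]

lemma formV_eq_vecMul_dotProduct (x y : Fin (n + 2*m) → R) :
    formV P φ m x y = ((fun k => P.sigma (x k) * P.i) ᵥ* GM P φ m) ⬝ᵥ y := by
  simp only [formV, vecMul, dotProduct, Finset.sum_mul]
  exact Finset.sum_comm

lemma formV_i_smul_left (u w : Fin (n + 2*m) → R) :
    formV P φ m (P.i • u) w = ((fun k => P.sigma (u k)) ᵥ* GM P φ m) ⬝ᵥ w := by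
  simp only [formV_eq_vecMul_dotProduct, Pi.smul_apply, smul_eq_mul, P.sigma_i_mul_mul_i]

lemma formV_eneg1vec_left (hm : 1 ≤ m) (w : Fin (n + 2*m) → R) :
    formV P φ m (eneg1vec R n m) w = -P.sigma 1 * w ⟨n, by omega⟩ := by
  rw [eneg1vec_eq_single hm, formV_eq_vecMul_dotProduct, P.sigma_single_one_mul_i,
    single_one_vecMul, GM_row_eneg1 P φ hm, single_dotProduct]

lemma Mneg1_eq_one_add_vecMulVec_sub_vecMulVec (hm : 1 ≤ m) (u : Fin (n + 2*m) → R)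
    (hu : u ⟨n, by omega⟩ = 0) (a : R) :
    Mneg1 P φ m u a = 1 + vecMulVec (eneg1vec R n m)
        (P.i • ((fun k => P.sigma (u k)) ᵥ* GM P φ m) + a • e1vec R n m)
      - vecMulVec u (e1vec R n m) := by
  have hi : ∀ r, P.i * (P.sigma r * -P.sigma 1) = -P.sigma r := fun r => by
    linear_combination (-P.sigma r) * P.i_mul_bar_one
  have hn0 : n < n + 2*m := by omega
  have hn1 : n + 1 < n + 2*m := by omega
  ext l j
  simp only [Matrix.sub_apply, Matrix.add_apply, one_apply, vecMulVec_apply, eneg1vec, e1vec,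
    Pi.add_apply, Pi.smul_apply, smul_eq_mul, Fin.ext_iff]
  by_cases hjn : (j : ℕ) = n
  · obtain rfl : j = ⟨n, hn0⟩ := Fin.ext hjn
    rw [vecMul_GM_of_even P φ _ le_rfl (by simp), hi]
    rcases eq_or_ne (l : ℕ) n with hl | hl
    · obtain rfl : l = ⟨n, hn0⟩ := Fin.ext hl
      simp [Mneg1, hu]
    rcases eq_or_ne (l : ℕ) (n + 1) with hl' | hl'
    · obtain rfl : l = ⟨n + 1, hn1⟩ := Fin.ext hl'
      simp [Mneg1]
    · simp only [Mneg1, dif_pos, dif_neg hl, dif_neg hl', if_neg hl, if_neg hl']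
      split_ifs <;> ring
  by_cases hln : (l : ℕ) = n + 1
  · obtain rfl : l = ⟨n + 1, hn1⟩ := Fin.ext hln
    simp only [Mneg1, dif_neg hjn, dif_pos, if_neg hjn, if_true, mul_zero, sub_zero, one_mul,
      add_zero]
    rcases lt_or_ge (j : ℕ) n with hj | hj
    · rw [dif_pos hj, vecMul_GM_of_lt P φ _ hj, if_neg (by omega), zero_add]
      rfl
    rcases eq_or_ne (j : ℕ) (n + 1) with hj1 | hj1
    · obtain rfl : j = ⟨n + 1, hn1⟩ := Fin.ext hj1
      simp [vecMul_GM_of_odd P φ _ hj, hu]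
    · rw [dif_neg (by omega), dif_neg hj1, if_neg (by omega), zero_add]
      split_ifs with he
      · rw [vecMul_GM_of_even P φ _ hj he, hi]
      · rw [vecMul_GM_of_odd P φ _ hj (by omega)]
  · simp only [Mneg1, dif_neg hjn, dif_neg hln, if_neg hln, if_neg hjn]
    ring

end GramMatrix

/-- for `u = t₁v₁ + … + tₙvₙ + b₋₁e₋₁ + b₂e₂ + b₋₂e₋₂ + … + bₘeₘ + b₋ₘe₋ₘ`
(coefficient of `e₁` equal to `0`) and `a ∈ R`, the transvection
`T₋₁(u, a) = T_{e₋₁, u·1̄⁻¹}(-a)` acts on coordinate column vectors as the matrix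
`M₋₁(u, a)`: `T₋₁(u, a)(w) = M₋₁(u, a)·w` for every `w` (in particular it is `R`-linear). -/
theorem Tneg1_matrix {R : Type*} [CommRing R] (P : PseudoInv R)
    {n m : ℕ} (hm : 2 ≤ m)
    (φ : Matrix (Fin n) (Fin n) R)
    (u : Fin (n + 2*m) → R) (hu : u ⟨n, by omega⟩ = 0) (a : R) :
    ∀ w : Fin (n + 2*m) → R,
      ESD P φ m (eneg1vec R n m) (P.i • u) (-a) w = Mneg1 P φ m u a *ᵥ w := by
  intro w
  have hm1 : 1 ≤ m := by omega
  rw [Mneg1_eq_one_add_vecMulVec_sub_vecMulVec P φ hm1 u hu a, sub_mulVec, add_mulVec,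
    one_mulVec, vecMulVec_mulVec, vecMulVec_mulVec, e1vec_eq_single hm1, add_dotProduct,
    smul_dotProduct, smul_dotProduct, single_one_dotProduct, ESD, formV_i_smul_left,
    formV_eneg1vec_left P φ hm1]
  ext l
  simp only [Pi.add_apply, Pi.sub_apply, Pi.smul_apply, smul_eq_mul, op_smul_eq_smul]
  linear_combination (a * eneg1vec R n m l - u l) * w ⟨n, by omega⟩ * P.i_mul_bar_one

end OddUnitary
end

section
/- For every row vector v = (a₁, …, a_{n+2m−1}) ∈ R^{n+2m−1}, one has the matrix identity Pᵗ·L(v)·P = M₋₁(u₁, a₁), where u₁ = −a_{2m}v₁ − a_{2m+1}v₂ − … − a_{n+2m−1}vₙ − a₂e₂ − a₃e₋₂ − … − a_{2m−2}eₘ − a_{2m−1}e₋ₘ. -/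
open Matrix BigOperators

namespace OddUnitary

variable {R : Type*} [CommRing R]

set_option maxHeartbeats 1000000
set_option linter.unreachableTactic false
set_option linter.unusedTactic false

section Statement10Aux

def gidx (n m : ℕ) (i : Fin (n + 2*m)) : Fin (n + 2*m) :=
  ⟨if (i : ℕ) < n then (i : ℕ) + 2*m else (i : ℕ) - n, by split <;> omega⟩

lemma gidx_coe (n m : ℕ) (i : Fin (n + 2*m)) :
    ((gidx n m i : Fin (n + 2*m)) : ℕ) = if (i : ℕ) < n then (i : ℕ) + 2*m else (i : ℕ) - n := rfl

lemma Pperm_apply {n m : ℕ} (k i : Fin (n + 2*m)) :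
    Pperm R n m k i = if k = gidx n m i then 1 else 0 := by
  have hk := k.isLt; have hi := i.isLt
  unfold Pperm
  simp only [Fin.ext_iff, gidx_coe]
  split_ifs <;> first | rfl | (exfalso; omega)

lemma conj_apply {n m : ℕ} (A : Matrix (Fin (n + 2*m)) (Fin (n + 2*m)) R)
    (i j : Fin (n + 2*m)) :
    ((Pperm R n m)ᵀ * A * Pperm R n m) i j = A (gidx n m i) (gidx n m j) := by
  rw [Matrix.mul_apply]
  rw [Finset.sum_eq_single (gidx n m j)]
  · rw [Pperm_apply, if_pos rfl, mul_one]
    rw [Matrix.mul_apply, Finset.sum_eq_single (gidx n m i)]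
    · rw [Matrix.transpose_apply, Pperm_apply, if_pos rfl, one_mul]
    · intro k _ hk; rw [Matrix.transpose_apply, Pperm_apply, if_neg hk, zero_mul]
    · simp
  · intro l _ hl; rw [Pperm_apply, if_neg hl, mul_zero]
  · simp

lemma gidx_lt {n m : ℕ} (i : Fin (n + 2*m)) (h : (i : ℕ) < n) :
    gidx n m i = ⟨(i : ℕ) + 2*m, by omega⟩ :=
  Fin.ext (by simp [gidx_coe, h])

lemma gidx_ge {n m : ℕ} (i : Fin (n + 2*m)) (h : ¬ (i : ℕ) < n) :
    gidx n m i = ⟨(i : ℕ) - n, by have := i.isLt; omega⟩ :=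
  Fin.ext (by simp [gidx_coe, h])

variable (P : PseudoInv R) {n m : ℕ} (φ : Matrix (Fin n) (Fin n) R)
  (v : Fin (n + 2*m - 1) → R)

lemma alpha_row0 (b c : Fin (n + 2*m - 1)) (hb : (b : ℕ) = 0) :
    alphaM P φ m v b c =
      (if (c : ℕ) = 0 then 1 else 0)
        - P.i * ∑ k, P.sigma (v k) * muM P φ m k c := by
  simp only [alphaM, Matrix.add_apply, Matrix.one_apply, Matrix.mul_apply, vecMulVec_apply,
    drow, Fin.ext_iff, hb]
  simp only [if_true]
  rw [sub_eq_add_neg, Finset.mul_sum, ← Finset.sum_neg_distrib]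
  congr 1
  · split <;> split <;> first | rfl | (exfalso; omega) | (exfalso; tauto) | (exfalso; (try simp only [true_and, and_true, false_and, and_false, not_and_or, not_true, not_false_eq_true, false_or, or_false, true_or, or_true] at *); omega) | (exfalso; tauto)
  · exact Finset.sum_congr rfl fun k _ => by ring

lemma alpha_row_ne (b c : Fin (n + 2*m - 1)) (hb : (b : ℕ) ≠ 0) :
    alphaM P φ m v b c = if (b : ℕ) = (c : ℕ) then 1 else 0 := by
  simp only [alphaM, Matrix.add_apply, Matrix.one_apply, Matrix.mul_apply, vecMulVec_apply,
    drow, Fin.ext_iff]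
  rw [if_neg hb]
  simp

lemma sumMu_zero (hm : 2 ≤ m) (c : Fin (n + 2*m - 1)) (hc : (c : ℕ) = 0) :
    ∑ k, P.sigma (v k) * muM P φ m k c = 0 := by
  refine Finset.sum_eq_zero fun k _ => ?_
  have hk := k.isLt
  have : muM P φ m k c = 0 := by
    simp only [muM, psiEnt, Fin.val_mk, hc]
    split_ifs <;> first | rfl | (exfalso; omega) | (exfalso; tauto) | (exfalso; (try simp only [true_and, and_true, false_and, and_false, not_and_or, not_true, not_false_eq_true, false_or, or_false, true_or, or_true] at *); omega) | (exfalso; tauto)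
  rw [this, mul_zero]

lemma sumMu_odd (hm : 2 ≤ m) (c : Fin (n + 2*m - 1)) (hc : (c : ℕ) % 2 = 1)
    (hc2 : (c : ℕ) < 2*m - 2) (t : Fin (n + 2*m - 1)) (ht : (t : ℕ) = (c : ℕ) + 1) :
    ∑ k, P.sigma (v k) * muM P φ m k c
      = P.sigma (v t) * (-(P.sigma 1)) := by
  rw [Finset.sum_eq_single t]
  · congr 1
    simp only [muM, psiEnt, ht]
    split_ifs <;> first | rfl | (exfalso; omega) | (exfalso; tauto) | (exfalso; (try simp only [true_and, and_true, false_and, and_false, not_and_or, not_true, not_false_eq_true, false_or, or_false, true_or, or_true] at *); omega) | (exfalso; tauto)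
  · intro k _ hk
    have hk2 : (k : ℕ) ≠ (c : ℕ) + 1 := fun h => hk (Fin.ext (by omega))
    have hkl := k.isLt
    have : muM P φ m k c = 0 := by
      simp only [muM, psiEnt]
      split_ifs <;> first | rfl | (exfalso; omega) | (exfalso; tauto) | (exfalso; (try simp only [true_and, and_true, false_and, and_false, not_and_or, not_true, not_false_eq_true, false_or, or_false, true_or, or_true] at *); omega) | (exfalso; tauto)
    rw [this, mul_zero]
  · simp

lemma sumMu_even (hm : 2 ≤ m) (c : Fin (n + 2*m - 1)) (hc : (c : ℕ) % 2 = 0)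
    (hc1 : 1 ≤ (c : ℕ)) (hc2 : (c : ℕ) ≤ 2*m - 2) (t : Fin (n + 2*m - 1))
    (ht : (t : ℕ) = (c : ℕ) - 1) :
    ∑ k, P.sigma (v k) * muM P φ m k c
      = P.sigma (v t) := by
  rw [Finset.sum_eq_single t]
  · have : muM P φ m t c = 1 := by
      simp only [muM, psiEnt, ht]
      split_ifs <;> first | rfl | (exfalso; omega) | (exfalso; tauto) | (exfalso; (try simp only [true_and, and_true, false_and, and_false, not_and_or, not_true, not_false_eq_true, false_or, or_false, true_or, or_true] at *); omega) | (exfalso; tauto)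
    rw [this, mul_one]
  · intro k _ hk
    have hk2 : (k : ℕ) ≠ (c : ℕ) - 1 := fun h => hk (Fin.ext (by omega))
    have hkl := k.isLt
    have : muM P φ m k c = 0 := by
      simp only [muM, psiEnt]
      split_ifs <;> first | rfl | (exfalso; omega) | (exfalso; tauto) | (exfalso; (try simp only [true_and, and_true, false_and, and_false, not_and_or, not_true, not_false_eq_true, false_or, or_false, true_or, or_true] at *); omega) | (exfalso; tauto)
    rw [this, mul_zero]
  · simp

lemma sumMu_phi (hn : 1 ≤ n) (hm : 2 ≤ m) (c : Fin (n + 2*m - 1))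
    (hc : 2*m - 1 ≤ (c : ℕ)) (col : Fin n) (hcol : (col : ℕ) + 2*m = (c : ℕ) + 1) :
    ∑ k, P.sigma (v k) * muM P φ m k c
      = ∑ l : Fin n, P.sigma (v ⟨2*m - 1 + (l : ℕ), by omega⟩)
          * φ l col := by
  have e : n + 2*m - 1 = (2*m - 1) + n := by omega
  have hcl := c.isLt
  rw [← (finCongr e.symm).sum_comp (fun k => P.sigma (v k) * muM P φ m k c)]
  rw [Fin.sum_univ_add]
  have h1 : ∀ k : Fin (2*m - 1),
      P.sigma (v (finCongr e.symm (Fin.castAdd n k))) * muM P φ m (finCongr e.symm (Fin.castAdd n k)) c = 0 := by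
    intro k
    have hkl := k.isLt
    have : muM P φ m (finCongr e.symm (Fin.castAdd n k)) c = 0 := by
      simp only [muM, psiEnt, finCongr_apply, Fin.coe_cast, Fin.coe_castAdd]
      split_ifs <;> first | rfl | (exfalso; omega) | (exfalso; tauto) | (exfalso; (try simp only [true_and, and_true, false_and, and_false, not_and_or, not_true, not_false_eq_true, false_or, or_false, true_or, or_true] at *); omega) | (exfalso; tauto)
    rw [this, mul_zero]
  rw [Finset.sum_eq_zero fun k _ => h1 k, zero_add]
  refine Finset.sum_congr rfl fun l _ => ?_
  have hll := l.isLt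
  have h2 : muM P φ m (finCongr e.symm (Fin.natAdd (2*m-1) l)) c = φ l col := by
    simp only [muM, psiEnt, finCongr_apply, Fin.coe_cast, Fin.coe_natAdd]
    rw [if_neg (by omega), dif_pos (by omega)]
    congr 1
    · apply Fin.ext; simp only [Fin.val_mk]; omega
    · apply Fin.ext; simp only [Fin.val_mk]; omega
  rw [h2]
  have h3 : (finCongr e.symm (Fin.natAdd (2*m-1) l)) = (⟨2*m - 1 + (l : ℕ), by omega⟩ : Fin (n+2*m-1)) := by
    apply Fin.ext; simp
  rw [h3]

end Statement10Aux

/-- for every `v = (a₁, …, a_{n+2m-1})`, one has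
`Pᵗ·L(v)·P = M₋₁(u₁, a₁)` where
`u₁ = -a_{2m}v₁ - … - a_{n+2m-1}vₙ - a₂e₂ - a₃e₋₂ - … - a_{2m-2}eₘ - a_{2m-1}e₋ₘ`. -/
theorem Pt_Lmat_P_eq_Mneg1 {R : Type*} [CommRing R] (P : PseudoInv R)
    {n m : ℕ} (hn : 1 ≤ n) (hm : 2 ≤ m)
    (φ : Matrix (Fin n) (Fin n) R) (hφ : IsUnit φ.det)
    (v : Fin (n + 2*m - 1) → R) :
    (Pperm R n m)ᵀ * Lmat P φ m v * Pperm R n m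
      = Mneg1 P φ m (u1vec hm v) (v ⟨0, by omega⟩) := by
  ext i j
  rw [conj_apply]
  have hif := i.isLt
  have hjf := j.isLt
  by_cases hiln : (i : ℕ) < n
  · rw [gidx_lt i hiln]
    by_cases hjln : (j : ℕ) < n
    · -- D: i < n, j < n
      rw [gidx_lt j hjln]
      simp only [Lmat, Mneg1, Fin.val_mk]
      rw [dif_neg (show ¬((i:ℕ) + 2*m = 0) by omega),
          dif_neg (show ¬((j:ℕ) + 2*m = 0) by omega),
          alpha_row_ne P φ v _ _ (by simp only [Fin.val_mk]; omega),
          dif_neg (show ¬((j:ℕ) = n) by omega),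
          dif_neg (show ¬((i:ℕ) = n + 1) by omega)]
      simp only [Fin.val_mk]
      split_ifs <;> first | rfl | (exfalso; omega)
    · rw [gidx_ge j hjln]
      by_cases hj : (j : ℕ) = n
      · -- A1: i < n, j = n
        simp only [Lmat, Mneg1, u1vec, Fin.val_mk]
        rw [dif_neg (show ¬((i:ℕ) + 2*m = 0) by omega),
            dif_pos (show (j:ℕ) - n = 0 by omega),
            dif_pos hj, dif_pos hiln, dif_pos hiln, neg_neg]
        congr 1
        exact Fin.ext (by simp only [Fin.val_mk]; omega)
      · -- D: i < n, j > n
        simp only [Lmat, Mneg1, Fin.val_mk]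
        rw [dif_neg (show ¬((i:ℕ) + 2*m = 0) by omega),
            dif_neg (show ¬((j:ℕ) - n = 0) by omega),
            alpha_row_ne P φ v _ _ (by simp only [Fin.val_mk]; omega),
            dif_neg hj,
            dif_neg (show ¬((i:ℕ) = n + 1) by omega)]
        simp only [Fin.val_mk]
        split_ifs <;> first | rfl | (exfalso; omega)
  · rw [gidx_ge i hiln]
    by_cases hj : (j : ℕ) = n
    · -- column e₁ cases, i ≥ n
      rw [gidx_ge j (by omega)]
      by_cases hi : (i : ℕ) = n
      · -- A2
        simp only [Lmat, Mneg1, Fin.val_mk]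
        rw [dif_pos (show (i:ℕ) - n = 0 by omega),
            if_pos (show (j:ℕ) - n = 0 by omega),
            dif_pos hj, dif_neg (show ¬((i:ℕ) < n) by omega), dif_pos hi]
      · by_cases hi1 : (i : ℕ) = n + 1
        · -- A3
          have hu : u1vec hm v ⟨n + 1, by omega⟩ = 0 := by
            simp [u1vec]
          simp only [Lmat, Mneg1, Fin.val_mk]
          rw [dif_neg (show ¬((i:ℕ) - n = 0) by omega),
              dif_pos (show (j:ℕ) - n = 0 by omega),
              dif_pos hj, dif_neg hiln, dif_neg hi, dif_pos hi1, hu]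
          simp only [map_zero, neg_zero, zero_add, sub_zero]
          congr 1
          exact Fin.ext (by simp only [Fin.val_mk]; omega)
        · -- A4
          have hu : u1vec hm v i = -v ⟨(i:ℕ) - n - 1, by omega⟩ := by
            simp only [u1vec]
            rw [dif_neg hiln, dif_neg (show ¬((i:ℕ) = n ∨ (i:ℕ) = n + 1) by omega)]
          simp only [Lmat, Mneg1, Fin.val_mk]
          rw [dif_neg (show ¬((i:ℕ) - n = 0) by omega),
              dif_pos (show (j:ℕ) - n = 0 by omega),
              dif_pos hj, dif_neg hiln, dif_neg hi, dif_neg hi1, hu, neg_neg]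
    · -- j ≠ n, i ≥ n
      by_cases hi : (i : ℕ) = n
      · -- B: row e₁, j ≠ n
        by_cases hjln : (j : ℕ) < n
        · rw [gidx_lt j hjln]
          simp only [Lmat, Mneg1, Fin.val_mk]
          rw [dif_pos (show (i:ℕ) - n = 0 by omega),
              if_neg (show ¬((j:ℕ) + 2*m = 0) by omega),
              dif_neg hj, dif_neg (show ¬((i:ℕ) = n + 1) by omega),
              if_neg (show ¬((i:ℕ) = (j:ℕ)) by omega)]
        · rw [gidx_ge j hjln]
          simp only [Lmat, Mneg1, Fin.val_mk]
          rw [dif_pos (show (i:ℕ) - n = 0 by omega),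
              if_neg (show ¬((j:ℕ) - n = 0) by omega),
              dif_neg hj, dif_neg (show ¬((i:ℕ) = n + 1) by omega),
              if_neg (show ¬((i:ℕ) = (j:ℕ)) by omega)]
      · by_cases hi1 : (i : ℕ) = n + 1
        · -- C: row e₋₁
          by_cases hjln : (j : ℕ) < n
          · -- C1
            rw [gidx_lt j hjln]
            simp only [Lmat, Mneg1, Fin.val_mk]
            rw [dif_neg (show ¬((i:ℕ) - n = 0) by omega),
                dif_neg (show ¬((j:ℕ) + 2*m = 0) by omega),
                alpha_row0 P φ v _ _ (by simp only [Fin.val_mk]; omega),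
                dif_neg hj, dif_pos hi1, dif_pos hjln,
                sumMu_phi P φ v hn hm _ (by simp only [Fin.val_mk]; omega)
                  ⟨(j:ℕ), hjln⟩ (by simp only [Fin.val_mk]; omega)]
            simp only [Fin.val_mk]
            rw [if_neg (show ¬((j:ℕ) + 2*m - 1 = 0) by omega)]
            have hs : (∑ l : Fin n, P.sigma (u1vec hm v ⟨(l:ℕ), by omega⟩) * φ l ⟨(j:ℕ), hjln⟩)
                = ∑ l : Fin n, -(P.sigma (v ⟨2*m - 1 + (l:ℕ), by omega⟩) * φ l ⟨(j:ℕ), hjln⟩) := by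
              refine Finset.sum_congr rfl fun l _ => ?_
              have hl := l.isLt
              simp only [u1vec, Fin.val_mk, dif_pos hl, map_neg, neg_mul]
            rw [hs, Finset.sum_neg_distrib]
            ring
          · rw [gidx_ge j hjln]
            by_cases hj1 : (j : ℕ) = n + 1
            · -- C2
              simp only [Lmat, Mneg1, Fin.val_mk]
              rw [dif_neg (show ¬((i:ℕ) - n = 0) by omega),
                  dif_neg (show ¬((j:ℕ) - n = 0) by omega),
                  alpha_row0 P φ v _ _ (by simp only [Fin.val_mk]; omega),
                  dif_neg hj, dif_pos hi1, dif_neg hjln, dif_pos hj1,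
                  sumMu_zero P φ v hm _ (by simp only [Fin.val_mk]; omega)]
              simp only [Fin.val_mk]
              rw [if_pos (show (j:ℕ) - n - 1 = 0 by omega)]
              ring
            · by_cases hp : ((j:ℕ) - n) % 2 = 0
              · -- C3
                simp only [Lmat, Mneg1, Fin.val_mk]
                rw [dif_neg (show ¬((i:ℕ) - n = 0) by omega),
                    dif_neg (show ¬((j:ℕ) - n = 0) by omega),
                    alpha_row0 P φ v _ _ (by simp only [Fin.val_mk]; omega),
                    dif_neg hj, dif_pos hi1, dif_neg hjln, dif_neg hj1, dif_pos hp,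
                    sumMu_odd P φ v hm _ (by simp only [Fin.val_mk]; omega)
                      (by simp only [Fin.val_mk]; omega)
                      ⟨(j:ℕ) - n, by omega⟩ (by simp only [Fin.val_mk]; omega)]
                simp only [Fin.val_mk, u1vec]
                rw [if_neg (show ¬((j:ℕ) - n - 1 = 0) by omega),
                    dif_neg (show ¬((j:ℕ) + 1 < n) by omega),
                    dif_neg (show ¬((j:ℕ) + 1 = n ∨ (j:ℕ) + 1 = n + 1) by omega)]
                simp only [map_neg, neg_neg, show (j:ℕ) + 1 - n - 1 = (j:ℕ) - n from by omega]
                linear_combination (P.sigma (v ⟨(j:ℕ) - n, by omega⟩)) * P.i_mul_bar_one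
              · -- C4
                simp only [Lmat, Mneg1, Fin.val_mk]
                rw [dif_neg (show ¬((i:ℕ) - n = 0) by omega),
                    dif_neg (show ¬((j:ℕ) - n = 0) by omega),
                    alpha_row0 P φ v _ _ (by simp only [Fin.val_mk]; omega),
                    dif_neg hj, dif_pos hi1, dif_neg hjln, dif_neg hj1, dif_neg hp,
                    sumMu_even P φ v hm _ (by simp only [Fin.val_mk]; omega)
                      (by simp only [Fin.val_mk]; omega) (by simp only [Fin.val_mk]; omega)
                      ⟨(j:ℕ) - n - 2, by omega⟩ (by simp only [Fin.val_mk]; omega)]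
                simp only [Fin.val_mk, u1vec]
                rw [if_neg (show ¬((j:ℕ) - n - 1 = 0) by omega),
                    dif_neg (show ¬((j:ℕ) - 1 < n) by omega),
                    dif_neg (show ¬((j:ℕ) - 1 = n ∨ (j:ℕ) - 1 = n + 1) by omega)]
                simp only [map_neg, show (j:ℕ) - 1 - n - 1 = (j:ℕ) - n - 2 from by omega]
                ring
        · -- D: i ≥ n+2, j ≠ n
          by_cases hjln : (j : ℕ) < n
          · rw [gidx_lt j hjln]
            simp only [Lmat, Mneg1, Fin.val_mk]
            rw [dif_neg (show ¬((i:ℕ) - n = 0) by omega),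
                dif_neg (show ¬((j:ℕ) + 2*m = 0) by omega),
                alpha_row_ne P φ v _ _ (by simp only [Fin.val_mk]; omega),
                dif_neg hj, dif_neg hi1]
            simp only [Fin.val_mk]
            split_ifs <;> first | rfl | (exfalso; omega)
          · rw [gidx_ge j hjln]
            simp only [Lmat, Mneg1, Fin.val_mk]
            rw [dif_neg (show ¬((i:ℕ) - n = 0) by omega),
                dif_neg (show ¬((j:ℕ) - n = 0) by omega),
                alpha_row_ne P φ v _ _ (by simp only [Fin.val_mk]; omega),
                dif_neg hj, dif_neg hi1]
            simp only [Fin.val_mk]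
            split_ifs <;> first | rfl | (exfalso; omega)

end OddUnitary
end
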